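/- arXiv:2504.19325 — 11 statements merged into one kernel-verified Lean document; each statement's English description precedes it below -/
import Mathlib

section
/- For every s ≥ 0 and prime power q, there exists a non-degenerate linear [(s+1)(q+1), 2, d]_q code with Singleton defect exactly s, and no non-degenerate [n,2,d]_q code with defect s has length n > (s+1)(q+1). That is, m^s(2,q) = (s+1)(q+1). -/
/-! In `PG(1, q)` the hyperplanes are the `q + 1` points themselves: every nonzero linear form
on `F²` is `x ↦ v₀ x₁ - v₁ x₀` for some `v ≠ 0`, whose kernel is the projective point `[v]`.
For a code of defect `s` every hyperplane carries at most `n - d = s + 1` points, so each of the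
`q + 1` points of the line has multiplicity at most `s + 1`, and `n ≤ (s + 1)(q + 1)`. Taking
every point exactly `s + 1` times attains the bound, since then every hyperplane carries exactly
`s + 1` points. -/

/-- The number of points (with multiplicity) of the projective system `G`
lying on the hyperplane `ker φ`. -/
noncomputable def hypCount {F : Type*} [Field F] [DecidableEq F] {n k : ℕ}
    (G : Fin n → Fin k → F) (φ : (Fin k → F) →ₗ[F] F) : ℕ :=
  (Finset.univ.filter fun i => φ (G i) = 0).card

/-- `G` is (the projective system of) a non-degenerate linear `[n,k,d]_q` code:
an `n`-multiset of nonzero points spanning `PG(k-1,q)`, every hyperplane containing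
at most `n - d` points, and some hyperplane (a secant) containing exactly `n - d`. -/
def IsCodePS (F : Type*) [Field F] [DecidableEq F] (n k d : ℕ)
    (G : Fin n → Fin k → F) : Prop :=
  0 < d ∧ (∀ i, G i ≠ 0) ∧ Submodule.span F (Set.range G) = ⊤ ∧
  (∀ φ : (Fin k → F) →ₗ[F] F, φ ≠ 0 → hypCount G φ + d ≤ n) ∧
  (∃ φ : (Fin k → F) →ₗ[F] F, φ ≠ 0 ∧ hypCount G φ + d = n)

open Projectivization Finset
open scoped LinearAlgebra.Projectivization

theorem Projectivization.span_range_rep (K V : Type*) [DivisionRing K] [AddCommGroup V]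
    [Module K V] : Submodule.span K (Set.range (Projectivization.rep : ℙ K V → V)) = ⊤ := by
  refine Submodule.eq_top_iff'.2 fun v => ?_
  by_cases hv : v = 0
  · simp [hv]
  obtain ⟨a, ha⟩ := exists_smul_eq_mk_rep K v hv
  rw [← inv_smul_smul a v, ha]
  exact Submodule.smul_of_tower_mem _ _ (Submodule.subset_span ⟨_, rfl⟩)

section ProjectiveLine

variable {F : Type*} [Field F]

def wedgeForm (v : Fin 2 → F) : (Fin 2 → F) →ₗ[F] F :=
  v 0 • LinearMap.proj 1 - v 1 • LinearMap.proj 0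

@[simp]
theorem wedgeForm_apply (v x : Fin 2 → F) : wedgeForm v x = v 0 * x 1 - v 1 * x 0 := rfl

theorem eq_wedgeForm (φ : (Fin 2 → F) →ₗ[F] F) :
    φ = wedgeForm ![φ (Pi.single 1 1), -φ (Pi.single 0 1)] := by
  ext i
  fin_cases i <;> simp

theorem exists_ne_zero_eq_wedgeForm {φ : (Fin 2 → F) →ₗ[F] F} (hφ : φ ≠ 0) :
    ∃ v ≠ 0, φ = wedgeForm v := by
  refine ⟨_, fun hv => hφ ?_, eq_wedgeForm φ⟩
  rw [eq_wedgeForm φ, hv]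
  ext
  simp

theorem wedgeForm_ne_zero {v : Fin 2 → F} (hv : v ≠ 0) : wedgeForm v ≠ 0 := by
  intro h
  refine hv (funext fun i => ?_)
  fin_cases i
  · simpa using LinearMap.congr_fun h (Pi.single 1 1)
  · simpa using LinearMap.congr_fun h (Pi.single 0 1)

theorem wedgeForm_eq_zero_iff {v w : Fin 2 → F} (hv : v ≠ 0) (hw : w ≠ 0) :
    wedgeForm v w = 0 ↔ mk F w hw = mk F v hv := by
  rw [mk_eq_mk_iff', wedgeForm_apply]
  constructor
  · intro h
    rcases eq_or_ne (v 0) 0 with hv0 | hv0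
    · have hv1 : v 1 ≠ 0 := fun hv1 => hv (funext fun i => by fin_cases i <;> assumption)
      have hw0 : w 0 = 0 := by simpa [hv0, hv1] using h
      exact ⟨w 1 / v 1, funext fun i => by fin_cases i <;> simp [hv0, hw0, hv1]⟩
    · refine ⟨w 0 / v 0, funext fun i => ?_⟩
      fin_cases i
      · simp [hv0]
      · show w 0 / v 0 * v 1 = w 1
        rw [div_mul_eq_mul_div, div_eq_iff hv0]
        linear_combination -h
  · rintro ⟨a, rfl⟩
    simp only [Pi.smul_apply, smul_eq_mul]
    ring

theorem card_projectiveLine [Fintype F] : Nat.card (ℙ F (Fin 2 → F)) = Fintype.card F + 1 := by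
  rw [card_of_finrank_two F _ (by simp), Nat.card_eq_fintype_card]

variable [DecidableEq F] {n : ℕ} {G : Fin n → Fin 2 → F}

open Classical in
theorem hypCount_wedgeForm (hG : ∀ i, G i ≠ 0) {v : Fin 2 → F} (hv : v ≠ 0) :
    hypCount G (wedgeForm v) = #{i | mk F (G i) (hG i) = mk F v hv} := by
  simp only [hypCount, wedgeForm_eq_zero_iff hv (hG _)]

theorem sum_hypCount_wedgeForm_rep [Fintype (ℙ F (Fin 2 → F))] (hG : ∀ i, G i ≠ 0) :
    ∑ p : ℙ F (Fin 2 → F), hypCount G (wedgeForm p.rep) = n := by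
  classical
  simp only [hypCount_wedgeForm hG (rep_nonzero _), mk_rep]
  simpa using (card_eq_sum_card_fiberwise (f := fun i => mk F (G i) (hG i))
    (s := univ) (t := univ) fun _ _ => mem_univ _).symm

theorem IsCodePS.length_le [Fintype F] {d : ℕ} (hG : IsCodePS F n 2 d G) :
    n ≤ (n - d) * (Fintype.card F + 1) := by
  obtain ⟨-, hG0, -, hbound, -⟩ := hG
  have := Fintype.ofFinite (ℙ F (Fin 2 → F))
  calc n = ∑ p : ℙ F (Fin 2 → F), hypCount G (wedgeForm p.rep) :=
        (sum_hypCount_wedgeForm_rep hG0).symm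
    _ ≤ ∑ _p : ℙ F (Fin 2 → F), (n - d) := sum_le_sum fun p _ => by
        have := hbound _ (wedgeForm_ne_zero p.rep_nonzero)
        omega
    _ = (n - d) * (Fintype.card F + 1) := by
        rw [sum_const, card_univ, Fintype.card_eq_nat_card, card_projectiveLine,
          smul_eq_mul, mul_comm]

variable {m : ℕ}

noncomputable def replicatedLine (e : Fin n ≃ Fin m × ℙ F (Fin 2 → F)) :
    Fin n → Fin 2 → F :=
  fun i => (e i).2.rep

theorem hypCount_replicatedLine (e : Fin n ≃ Fin m × ℙ F (Fin 2 → F))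
    {φ : (Fin 2 → F) →ₗ[F] F} (hφ : φ ≠ 0) : hypCount (replicatedLine e) φ = m := by
  classical
  obtain ⟨v, hv, rfl⟩ := exists_ne_zero_eq_wedgeForm hφ
  rw [hypCount_wedgeForm (G := replicatedLine e) (fun i => rep_nonzero _) hv]
  simp only [replicatedLine, mk_rep]
  rw [card_equiv e (t := univ ×ˢ {mk F v hv}) (by simp [Prod.ext_iff, eq_comm])]
  simp

theorem isCodePS_replicatedLine [Fintype F] (hm : 0 < m)
    (e : Fin n ≃ Fin m × ℙ F (Fin 2 → F)) :
    IsCodePS F n 2 (n - m) (replicatedLine e) := by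
  have hn : n = m * (Fintype.card F + 1) := by
    rw [← Nat.card_fin n, Nat.card_congr e, Nat.card_prod, Nat.card_fin, card_projectiveLine]
  have hq : 0 < Fintype.card F := Fintype.card_pos
  have hmn : m < n := by rw [hn]; nlinarith
  obtain ⟨φ, hφ⟩ := exists_ne (0 : Module.Dual F (Fin 2 → F))
  refine ⟨by omega, fun i => rep_nonzero _,
    eq_top_mono (Submodule.span_mono ?_) (span_range_rep F _),
    fun ψ hψ => by rw [hypCount_replicatedLine e hψ]; omega,
    ⟨φ, hφ, by rw [hypCount_replicatedLine e hφ]; omega⟩⟩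
  rintro _ ⟨p, rfl⟩
  exact ⟨e.symm (⟨0, hm⟩, p), by simp [replicatedLine]⟩

end ProjectiveLine

/-- `m^s(2,q) = (s+1)(q+1)`: there is a non-degenerate `[(s+1)(q+1), 2, d]_q` code
with Singleton defect exactly `s`, and every non-degenerate `[n,2,d]_q` code with
defect `s` has `n ≤ (s+1)(q+1)`. -/
theorem m_s_two_eq (F : Type*) [Field F] [Fintype F] [DecidableEq F] (s : ℕ) :
    (∃ d : ℕ, ∃ G : Fin ((s + 1) * (Fintype.card F + 1)) → Fin 2 → F,
      IsCodePS F ((s + 1) * (Fintype.card F + 1)) 2 d G ∧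
        d + 2 + s = (s + 1) * (Fintype.card F + 1) + 1) ∧
    (∀ (n d : ℕ) (G : Fin n → Fin 2 → F), IsCodePS F n 2 d G → d + 2 + s = n + 1 →
      n ≤ (s + 1) * (Fintype.card F + 1)) := by
  let e : Fin ((s + 1) * (Fintype.card F + 1)) ≃ Fin (s + 1) × ℙ F (Fin 2 → F) :=
    finProdFinEquiv.symm.trans
      ((Equiv.refl _).prodCongr (Finite.equivFinOfCardEq card_projectiveLine).symm)
  have hs : s + 1 ≤ (s + 1) * (Fintype.card F + 1) := Nat.le_mul_of_pos_right _ (Nat.succ_pos _)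
  refine ⟨⟨_, _, isCodePS_replicatedLine (Nat.succ_pos s) e, by omega⟩,
    fun n d G hG hdefect => ?_⟩
  have hmult : n - d = s + 1 := by omega
  exact hmult ▸ hG.length_le
end

section
/- If C is a non-degenerate linear [n,2,d]_q code with Singleton defect s > 0, then the dual code C^⊥ is an AMDS code, i.e., has Singleton defect exactly 1. -/
/-!
Nondegeneracy of `C` means that no unit vector is orthogonal to `C`, so every nonzero dual word
has weight at least `2`. Since `s > 0`, a minimum-weight word `x` of `C` vanishes on a set `S` of
two coordinates. Restriction to `S` maps the `2`-dimensional code `C` to `F^S ≅ F²` and kills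
`x`, so it is not onto; a nonzero functional on `F^S` vanishing on its image is, read as a vector
through the dot product, a dual word supported in `S`, hence of weight exactly `2`.
-/

/-- `C` is a linear `[n,k,d]_q` code: a `k`-dimensional subspace of `F^n`
with minimum Hamming distance `d`. -/
def IsLinearCode (F : Type*) [Field F] [DecidableEq F] (n k d : ℕ)
    (C : Submodule F (Fin n → F)) : Prop :=
  Module.finrank F ↥C = k ∧ 0 < d ∧
  (∀ x ∈ C, x ≠ 0 → d ≤ hammingNorm x) ∧ (∃ x ∈ C, x ≠ 0 ∧ hammingNorm x = d)

/-- The dual code `C^⊥ = {y : y ⬝ x = 0 for all x ∈ C}`. -/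
def dualCode {F : Type*} [Field F] {n : ℕ} (C : Submodule F (Fin n → F)) :
    Submodule F (Fin n → F) where
  carrier := {y | ∀ x ∈ C, ∑ i, y i * x i = 0}
  add_mem' := by
    intro a b ha hb x hx
    have h1 := ha x hx
    have h2 := hb x hx
    simp only [Pi.add_apply, add_mul, Finset.sum_add_distrib, h1, h2, add_zero]
  zero_mem' := by
    intro x hx
    simp
  smul_mem' := by
    intro c a ha x hx
    have h := ha x hx
    simp only [Pi.smul_apply, smul_eq_mul, mul_assoc, ← Finset.mul_sum, h, mul_zero]

open Module Finset

section Hamming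

variable {ι : Type*} [Fintype ι] {β : ι → Type*} [∀ i, DecidableEq (β i)]
  [∀ i, Zero (β i)]

theorem hammingNorm_le_card_of_support_subset {x : ∀ i, β i} {S : Finset ι}
    (hx : ∀ k ∉ S, x k = 0) : hammingNorm x ≤ #S :=
  card_le_card fun k hk => by_contra fun hkS => (mem_filter.mp hk).2 (hx k hkS)

theorem card_filter_eq_zero_add_hammingNorm (x : ∀ i, β i) :
    #{k | x k = 0} + hammingNorm x = Fintype.card ι :=
  card_filter_add_card_filter_not _

end Hamming

theorem Submodule.finrank_map_lt_of_mem_ker {K V W : Type*} [Field K] [AddCommGroup V]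
    [Module K V] [AddCommGroup W] [Module K W] {p : Submodule K V} [FiniteDimensional K p]
    (f : V →ₗ[K] W) {x : V} (hxp : x ∈ p) (hx0 : x ≠ 0) (hfx : f x = 0) :
    finrank K (p.map f) < finrank K p := by
  have hker : LinearMap.ker (f.domRestrict p) ≠ ⊥ := fun h => by
    have hx : (⟨x, hxp⟩ : p) ∈ LinearMap.ker (f.domRestrict p) := hfx
    rw [h, Submodule.mem_bot] at hx
    exact hx0 (congrArg Subtype.val hx)
  have hker_pos := mt Submodule.finrank_eq_zero.mp hker
  have hrank_nullity := LinearMap.finrank_range_add_finrank_ker (f.domRestrict p)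
  rw [LinearMap.range_domRestrict] at hrank_nullity
  omega

section Dual

variable {F : Type*} [Field F] {n : ℕ}

theorem mem_dualCode_iff_dotProductEquiv_mem_dualAnnihilator (C : Submodule F (Fin n → F))
    (y : Fin n → F) : y ∈ dualCode C ↔ dotProductEquiv F (Fin n) y ∈ C.dualAnnihilator := by
  rw [Submodule.mem_dualAnnihilator]
  rfl

theorem finrank_dualCode (C : Submodule F (Fin n → F)) :
    finrank F (dualCode C) = n - finrank F C := by
  have hdual :
      dualCode C = C.dualAnnihilator.map (dotProductEquiv F (Fin n)).symm.toLinearMap := by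
    ext y
    rw [← Submodule.comap_equiv_eq_map_symm]
    exact mem_dualCode_iff_dotProductEquiv_mem_dualAnnihilator C y
  have hsum := Subspace.finrank_add_finrank_dualAnnihilator_eq C
  rw [finrank_fin_fun] at hsum
  rw [hdual, LinearEquiv.finrank_map_eq]
  omega

theorem two_le_hammingNorm_of_mem_dualCode [DecidableEq F] {C : Submodule F (Fin n → F)}
    (hnd : ∀ i : Fin n, ∃ x ∈ C, x i ≠ 0) {y : Fin n → F} (hy : y ∈ dualCode C) (hy0 : y ≠ 0) :
    2 ≤ hammingNorm y := by
  obtain ⟨i, hi⟩ := Function.ne_iff.mp hy0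
  obtain ⟨c, hc, hci⟩ := hnd i
  obtain ⟨j, hji, hj⟩ : ∃ j ≠ i, y j ≠ 0 := by
    by_contra! h
    have hsum : ∑ k, y k * c k = y i * c i :=
      sum_eq_single i (fun k _ hk => by rw [h k hk, zero_mul]) (by simp)
    exact mul_ne_zero hi hci (hsum ▸ hy c hc)
  exact one_lt_card.mpr ⟨j, by simpa, i, by simpa, hji⟩

theorem exists_ne_zero_mem_dualCode_supported {C : Submodule F (Fin n → F)} (S : Finset (Fin n))
    (hCS : finrank F C ≤ #S) {x : Fin n → F} (hxC : x ∈ C) (hx0 : x ≠ 0)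
    (hxS : ∀ k ∈ S, x k = 0) : ∃ y ∈ dualCode C, y ≠ 0 ∧ ∀ k ∉ S, y k = 0 := by
  set r : (Fin n → F) →ₗ[F] (S → F) := LinearMap.funLeft F F Subtype.val
  have hr : Function.Surjective r :=
    LinearMap.funLeft_surjective_of_injective _ _ _ Subtype.val_injective
  have hlt : C.map r < ⊤ := by
    refine Submodule.lt_top_of_finrank_lt_finrank ?_
    calc finrank F (C.map r) < finrank F C :=
          Submodule.finrank_map_lt_of_mem_ker r hxC hx0 (funext fun k => hxS k k.2)
      _ ≤ finrank F (S → F) := by rwa [finrank_fintype_fun_eq_card, Fintype.card_coe]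
  obtain ⟨f, hf0, hCf⟩ := (C.map r).exists_le_ker_of_lt_top hlt
  refine ⟨(dotProductEquiv F (Fin n)).symm (f ∘ₗ r), ?_, ?_, fun k hk => ?_⟩
  · rw [mem_dualCode_iff_dotProductEquiv_mem_dualAnnihilator, LinearEquiv.apply_symm_apply,
      Submodule.mem_dualAnnihilator]
    exact fun c hc => hCf (Submodule.mem_map_of_mem hc)
  · rw [Ne, LinearEquiv.map_eq_zero_iff]
    exact fun h => hf0 (LinearMap.ext fun v => by
      obtain ⟨u, rfl⟩ := hr v
      exact LinearMap.congr_fun h u)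
  · have hrk : r (Pi.single k 1) = 0 := funext fun j =>
      Pi.single_eq_of_ne (ne_of_mem_of_not_mem j.2 hk) _
    simp [hrk]

end Dual

theorem dual_of_two_dim_is_AMDS_general (F : Type*) [Field F] [DecidableEq F]
    (n d s : ℕ) (C : Submodule F (Fin n → F))
    (hC : IsLinearCode F n 2 d C)
    (hnd : ∀ i : Fin n, ∃ x ∈ C, x i ≠ 0)
    (hs : d + 2 + s = n + 1) (hspos : 0 < s) :
    IsLinearCode F n (n - 2) 2 (dualCode C) := by
  obtain ⟨hrank, -, -, x, hxC, hx0, hxw⟩ := hC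
  have hzeros : 2 ≤ #{k | x k = 0} := by
    have hcard := card_filter_eq_zero_add_hammingNorm x
    rw [Fintype.card_fin] at hcard
    omega
  obtain ⟨S, hSx, hS⟩ := exists_subset_card_eq hzeros
  obtain ⟨y, hy, hy0, hyS⟩ := exists_ne_zero_mem_dualCode_supported S (hrank.trans hS.symm).le
    hxC hx0 fun k hk => (mem_filter.mp (hSx hk)).2
  have hlow : ∀ z ∈ dualCode C, z ≠ 0 → 2 ≤ hammingNorm z := fun z hz =>
    two_le_hammingNorm_of_mem_dualCode hnd hz
  refine ⟨by rw [finrank_dualCode, hrank], two_pos, hlow, y, hy, hy0, ?_⟩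
  exact le_antisymm (hS ▸ hammingNorm_le_card_of_support_subset hyS) (hlow y hy hy0)

/-- If `C` is a non-degenerate `[n,2,d]_q` code with Singleton defect `s > 0`,
then the dual code `C^⊥` is an `[n, n-2, 2]_q` AMDS code (Singleton defect exactly `1`). -/
theorem dual_of_two_dim_is_AMDS (F : Type*) [Field F] [Fintype F] [DecidableEq F]
    (n d s : ℕ) (C : Submodule F (Fin n → F))
    (hC : IsLinearCode F n 2 d C)
    (hnd : ∀ i : Fin n, ∃ x ∈ C, x i ≠ 0)
    (hs : d + 2 + s = n + 1) (hspos : 0 < s) :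
    IsLinearCode F n (n - 2) 2 (dualCode C) :=
  dual_of_two_dim_is_AMDS_general F n d s C hC hnd hs hspos
end

section
/- If G_1 is an [n_1,k,d_1]_q code with Singleton defect s_1 and G_2 is an [n_2,k,d_2]_q code with Singleton defect s_2 (both viewed as projective systems in PG(k−1,q)), then the union multiset G_1 ∪ G_2 is an [n_1+n_2, k, d]_q code with Singleton defect at most k − 1 + s_1 + s_2. Consequently, if s = k−1+s_1+s_2 then m^s(k,q) ≥ m^{s_1}(k,q) + m^{s_2}(k,q). -/
/-- `mPar F s k` is `m^s(k,q)`: the maximum length of a non-degenerate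
`[n,k,d]_q` code with Singleton defect `s = n - k + 1 - d`. -/
noncomputable def mPar (F : Type*) [Field F] [Fintype F] [DecidableEq F] (s k : ℕ) : ℕ :=
  sSup {n : ℕ | ∃ d : ℕ, ∃ G : Fin n → Fin k → F, IsCodePS F n k d G ∧ d + k + s = n + 1}

open Module

section LinearAlgebra

variable {K V : Type*} [Field K] [AddCommGroup V] [Module K V] [FiniteDimensional K V]

theorem exists_ne_zero_apply_eq_zero (hV : 1 < finrank K V) (f : Dual K V) :
    ∃ x, x ≠ 0 ∧ f x = 0 := by
  obtain ⟨x, hx, hx0⟩ := Submodule.exists_mem_ne_zero_of_ne_bot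
    (LinearMap.ker_ne_bot_of_finrank_lt (f := f) (by rwa [finrank_self]))
  exact ⟨x, hx0, hx⟩

theorem exists_dual_ne_zero_apply_eq_zero (hV : 1 < finrank K V) (v : V) :
    ∃ f : Dual K V, f ≠ 0 ∧ f v = 0 :=
  exists_ne_zero_apply_eq_zero (by rwa [Subspace.dual_finrank_eq]) (Dual.eval K V v)

theorem Module.Dual.injective_of_finrank_eq_one (hV : finrank K V = 1) {f : Dual K V}
    (hf : f ≠ 0) : Function.Injective f := by
  have hker := Dual.finrank_ker_add_one_of_ne_zero hf
  rw [← LinearMap.ker_eq_bot, ← Submodule.finrank_eq_zero]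
  omega

end LinearAlgebra

section Codes

variable {F : Type*} [Field F] [DecidableEq F]

section HypCount

variable {k : ℕ}

theorem hypCount_append {n₁ n₂ : ℕ} (G₁ : Fin n₁ → Fin k → F) (G₂ : Fin n₂ → Fin k → F)
    (φ : (Fin k → F) →ₗ[F] F) :
    hypCount (Fin.append G₁ G₂) φ = hypCount G₁ φ + hypCount G₂ φ := by
  simp only [hypCount, Finset.card_filter, Fin.sum_univ_add, Fin.append_left, Fin.append_right]

theorem hypCount_snoc {n : ℕ} (G : Fin n → Fin k → F) (x : Fin k → F)
    (φ : (Fin k → F) →ₗ[F] F) :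
    hypCount (Fin.snoc G x) φ = hypCount G φ + if φ x = 0 then 1 else 0 := by
  simp only [hypCount, Finset.card_filter, Fin.sum_univ_castSucc, Fin.snoc_castSucc,
    Fin.snoc_last]

theorem hypCount_le {n : ℕ} (G : Fin n → Fin k → F) (φ : (Fin k → F) →ₗ[F] F) :
    hypCount G φ ≤ n :=
  (Finset.card_filter_le _ _).trans_eq (Finset.card_fin n)

theorem hypCount_eq_zero_of_dim_one {n : ℕ} {G : Fin n → Fin 1 → F} (hG : ∀ i, G i ≠ 0)
    {φ : (Fin 1 → F) →ₗ[F] F} (hφ : φ ≠ 0) : hypCount G φ = 0 := by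
  have hinj := Dual.injective_of_finrank_eq_one (by simp) hφ
  simp only [hypCount, Finset.card_eq_zero, Finset.filter_eq_empty_iff, Finset.mem_univ,
    true_implies]
  exact fun i hi => hG i (hinj (hi.trans (map_zero φ).symm))

end HypCount

namespace IsCodePS

variable {n k d : ℕ} {G : Fin n → Fin k → F}

theorem one_le_dim (h : IsCodePS F n k d G) : 1 ≤ k := by
  obtain ⟨-, -, -, -, φ, hφ, -⟩ := h
  by_contra hk
  obtain rfl : k = 0 := by omega
  exact hφ (LinearMap.ext fun x => by rw [Subsingleton.elim x 0, map_zero, map_zero])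

theorem eq_length_of_dim_one {G : Fin n → Fin 1 → F} (h : IsCodePS F n 1 d G) : d = n := by
  obtain ⟨-, hG, -, -, φ, hφ, hsec⟩ := h
  rw [hypCount_eq_zero_of_dim_one hG hφ] at hsec
  omega

theorem exists_of_hypCount_le {d₀ : ℕ} (hd₀ : 0 < d₀) (hG : ∀ i, G i ≠ 0)
    (hspan : Submodule.span F (Set.range G) = ⊤) (hk : ∃ φ : (Fin k → F) →ₗ[F] F, φ ≠ 0)
    (hmax : ∀ φ : (Fin k → F) →ₗ[F] F, φ ≠ 0 → hypCount G φ + d₀ ≤ n) :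
    ∃ d, d₀ ≤ d ∧ IsCodePS F n k d G := by
  set S : Set ℕ := {m | ∃ φ : (Fin k → F) →ₗ[F] F, φ ≠ 0 ∧ hypCount G φ = m}
  have hbdd : BddAbove S := ⟨n, by rintro _ ⟨φ, -, rfl⟩; exact hypCount_le G φ⟩
  have hne : S.Nonempty := let ⟨φ, hφ⟩ := hk; ⟨_, φ, hφ, rfl⟩
  obtain ⟨φ₀, hφ₀, hsup⟩ := Nat.sSup_mem hne hbdd
  have hle : ∀ φ : (Fin k → F) →ₗ[F] F, φ ≠ 0 → hypCount G φ ≤ sSup S :=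
    fun φ hφ => le_csSup hbdd ⟨φ, hφ, rfl⟩
  have := hmax φ₀ hφ₀
  refine ⟨n - sSup S, by omega, by omega, hG, hspan, fun φ hφ => ?_, φ₀, hφ₀, by omega⟩
  have := hle φ hφ
  omega

theorem append {n₁ n₂ d₁ d₂ : ℕ} {G₁ : Fin n₁ → Fin k → F} {G₂ : Fin n₂ → Fin k → F}
    (h₁ : IsCodePS F n₁ k d₁ G₁) (h₂ : IsCodePS F n₂ k d₂ G₂) :
    ∃ d, d₁ + d₂ ≤ d ∧ IsCodePS F (n₁ + n₂) k d (Fin.append G₁ G₂) := by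
  obtain ⟨hd₁, hG₁, hspan₁, hmax₁, φ₁, hφ₁, -⟩ := h₁
  obtain ⟨-, hG₂, -, hmax₂, -⟩ := h₂
  refine exists_of_hypCount_le (by omega) (fun i => ?_) ?_ ⟨φ₁, hφ₁⟩ fun φ hφ => ?_
  · induction i using Fin.addCases with
    | left i => simpa using hG₁ i
    | right i => simpa using hG₂ i
  · refine eq_top_mono (Submodule.span_mono ?_) hspan₁
    rintro _ ⟨i, rfl⟩
    exact ⟨Fin.castAdd n₂ i, Fin.append_left G₁ G₂ i⟩
  · have := hmax₁ φ hφ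
    have := hmax₂ φ hφ
    rw [hypCount_append]
    omega

theorem exists_snoc (hk : 2 ≤ k) (h : IsCodePS F n k d G) :
    ∃ x, IsCodePS F (n + 1) k d (Fin.snoc G x) := by
  obtain ⟨hd, hG, hspan, hmax, φ₀, hφ₀, hsec⟩ := h
  obtain ⟨x, hx, hφ₀x⟩ := exists_ne_zero_apply_eq_zero (by rw [finrank_fin_fun]; omega) φ₀
  refine ⟨x, hd, fun i => ?_, eq_top_mono (Submodule.span_mono ?_) hspan,
    fun φ hφ => ?_, φ₀, hφ₀, ?_⟩
  · induction i using Fin.lastCases with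
    | last => simpa using hx
    | cast i => simpa using hG i
  · rintro _ ⟨i, rfl⟩
    exact ⟨i.castSucc, Fin.snoc_castSucc ..⟩
  · have := hmax φ hφ
    rw [hypCount_snoc]
    split_ifs <;> omega
  · rw [hypCount_snoc, if_pos hφ₀x]
    omega

theorem exists_of_length_le (hk : 2 ≤ k) (h : IsCodePS F n k d G) {m : ℕ} (hnm : n ≤ m) :
    ∃ G' : Fin m → Fin k → F, IsCodePS F m k d G' := by
  induction m, hnm using Nat.le_induction with
  | base => exact ⟨G, h⟩
  | succ m _ ih =>
    obtain ⟨G', hG'⟩ := ih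
    obtain ⟨x, hx⟩ := hG'.exists_snoc hk
    exact ⟨_, hx⟩

theorem length_le_s6 [Fintype F] (hk : 2 ≤ k) (h : IsCodePS F n k d G) :
    n ≤ (n - d) * Fintype.card F ^ k := by
  obtain ⟨-, -, -, hmax, -⟩ := h
  have hfiber : ∀ y : Fin k → F, (Finset.univ.filter fun i => G i = y).card ≤ n - d := by
    intro y
    obtain ⟨φ, hφ, hφy⟩ := exists_dual_ne_zero_apply_eq_zero (K := F) (by rw [finrank_fin_fun]; omega) y
    have hsub : (Finset.univ.filter fun i => G i = y) ⊆
        Finset.univ.filter fun i => φ (G i) = 0 := by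
      intro i
      simp only [Finset.mem_filter, Finset.mem_univ, true_and]
      rintro rfl
      exact hφy
    have := Finset.card_le_card hsub
    have := hmax φ hφ
    rw [hypCount] at this
    omega
  simpa using Finset.card_le_mul_card_image_of_maps_to (s := Finset.univ)
    (fun i _ => Finset.mem_univ (G i)) (n - d) fun y _ => hfiber y

end IsCodePS

variable [Fintype F]

variable (F) in
def codeLengths (s k : ℕ) : Set ℕ :=
  {n | ∃ d : ℕ, ∃ G : Fin n → Fin k → F, IsCodePS F n k d G ∧ d + k + s = n + 1}

theorem mPar_eq_sSup_codeLengths (s k : ℕ) : mPar F s k = sSup (codeLengths F s k) := rfl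

theorem bddAbove_codeLengths {s k : ℕ} (hk : 2 ≤ k) : BddAbove (codeLengths F s k) := by
  refine ⟨(k + s - 1) * Fintype.card F ^ k, ?_⟩
  rintro n ⟨d, G, hG, e⟩
  have := hG.length_le_s6 hk
  rwa [show n - d = k + s - 1 by omega] at this

theorem mPar_zero_one : mPar F 0 1 = 0 := by
  have hcode : ∀ n, n + 1 ∈ codeLengths F 0 1 := by
    intro n
    set G : Fin (n + 1) → Fin 1 → F := fun _ => 1
    have hG : ∀ i, G i ≠ 0 := fun _ => one_ne_zero
    have hφ : (LinearMap.proj 0 : (Fin 1 → F) →ₗ[F] F) ≠ 0 := fun h => by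
      simpa using LinearMap.congr_fun h 1
    refine ⟨n + 1, G, ⟨n.succ_pos, hG, ?_, fun φ hφ => ?_, _, hφ, ?_⟩, rfl⟩
    · rw [Set.range_const, ← finrank_eq_one_iff_of_nonzero _ one_ne_zero]
      simp
    · rw [hypCount_eq_zero_of_dim_one hG hφ]
      omega
    · rw [hypCount_eq_zero_of_dim_one hG hφ]
      omega
  have hunbdd : ¬ BddAbove (codeLengths F 0 1) := fun ⟨b, hb⟩ => by
    have := hb (hcode b)
    omega
  rw [mPar_eq_sSup_codeLengths, csSup_of_not_bddAbove hunbdd, csSup_empty]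
  rfl

omit [Fintype F] in
theorem exists_le_mem_codeLengths_add {k s₁ s₂ n₁ n₂ : ℕ} (hk : 2 ≤ k)
    (h₁ : n₁ ∈ codeLengths F s₁ k) (h₂ : n₂ ∈ codeLengths F s₂ k) :
    ∃ m, n₁ + n₂ ≤ m ∧ m ∈ codeLengths F (k - 1 + s₁ + s₂) k := by
  obtain ⟨d₁, G₁, hG₁, e₁⟩ := h₁
  obtain ⟨d₂, G₂, hG₂, e₂⟩ := h₂
  obtain ⟨d, hd, hG⟩ := hG₁.append hG₂
  obtain ⟨G, hG'⟩ := hG.exists_of_length_le hk (m := d + k + (k - 1 + s₁ + s₂) - 1) (by omega)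
  exact ⟨_, by omega, d, G, hG', by omega⟩

theorem mPar_add_le {k s₁ s₂ : ℕ} (hk : 2 ≤ k) (h₁ : (codeLengths F s₁ k).Nonempty)
    (h₂ : (codeLengths F s₂ k).Nonempty) :
    mPar F s₁ k + mPar F s₂ k ≤ mPar F (k - 1 + s₁ + s₂) k := by
  obtain ⟨m, hm, hmem⟩ := exists_le_mem_codeLengths_add hk
    (Nat.sSup_mem h₁ (bddAbove_codeLengths hk)) (Nat.sSup_mem h₂ (bddAbove_codeLengths hk))
  exact hm.trans (le_csSup (bddAbove_codeLengths hk) hmem)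

end Codes

/-- The union (as multisets, i.e. the concatenation) of an `[n₁,k,d₁]_q` code of defect
`s₁` and an `[n₂,k,d₂]_q` code of defect `s₂` is an `[n₁+n₂,k,d]_q` code whose Singleton
defect is at most `k - 1 + s₁ + s₂`; consequently, for `s = k - 1 + s₁ + s₂`,
`m^s(k,q) ≥ m^{s₁}(k,q) + m^{s₂}(k,q)`. -/
theorem union_defect_bound (F : Type*) [Field F] [Fintype F] [DecidableEq F]
    (k n₁ n₂ d₁ d₂ s₁ s₂ : ℕ)
    (G₁ : Fin n₁ → Fin k → F) (G₂ : Fin n₂ → Fin k → F)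
    (h₁ : IsCodePS F n₁ k d₁ G₁) (e₁ : d₁ + k + s₁ = n₁ + 1)
    (h₂ : IsCodePS F n₂ k d₂ G₂) (e₂ : d₂ + k + s₂ = n₂ + 1) :
    (∃ d : ℕ, IsCodePS F (n₁ + n₂) k d (Fin.append G₁ G₂) ∧
      n₁ + n₂ + 2 ≤ d + 2 * k + s₁ + s₂) ∧
    mPar F s₁ k + mPar F s₂ k ≤ mPar F (k - 1 + s₁ + s₂) k := by
  obtain ⟨d, hd, hcode⟩ := h₁.append h₂
  refine ⟨⟨d, hcode, by omega⟩, ?_⟩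
  rcases h₁.one_le_dim.eq_or_lt with rfl | hk
  · have := h₁.eq_length_of_dim_one
    have := h₂.eq_length_of_dim_one
    obtain ⟨rfl, rfl⟩ : s₁ = 0 ∧ s₂ = 0 := by omega
    simp [mPar_zero_one]
  · exact mPar_add_le hk ⟨n₁, d₁, G₁, h₁, e₁⟩ ⟨n₂, d₂, G₂, h₂, e₂⟩
end

section
/- For every k ≥ 2, s ≥ 0 and prime power q, m^s(k,q) ≤ (s+1)(q+1) + k − 2: every non-degenerate [n,k,d]_q code with Singleton defect s has n ≤ (s+1)(q+1)+k−2. -/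
/-!
Pick `k - 2` linearly independent points of the code; they span a subspace `P` of codimension 2,
and the `q²` functionals vanishing on `P` make up the pencil of `q + 1` hyperplanes through `P`
(each counted `q - 1` times) together with `0`. Count incidences between points and these
functionals: a point of `P` is killed by all `q²` of them and any other point by at least `q`,
while a nonzero functional kills at most `k + s - 1` points. Hence
`q² (k - 2) + q (n - k + 2) + (k + s - 1) ≤ n + q² (k + s - 1)`, which after dividing by `q - 1`
is the bound.
-/

open Module Finset

theorem AddMonoidHom.card_le_card_ker_mul_card {G A : Type*} [AddGroup G] [AddGroup A] [Finite A]
    (f : G →+ A) : Nat.card G ≤ Nat.card f.ker * Nat.card A := by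
  rw [← f.ker.card_mul_index, AddSubgroup.index_ker]
  exact Nat.mul_le_mul_left _ (Finite.card_subtype_le _)

theorem Submodule.natCard_dualAnnihilator {F V : Type*} [Field F] [Fintype F] [AddCommGroup V]
    [Module F V] [FiniteDimensional F V] (P : Submodule F V) :
    Nat.card P.dualAnnihilator = Fintype.card F ^ (finrank F V - finrank F P) := by
  have := Subspace.finrank_add_finrank_dualAnnihilator_eq P
  rw [Module.natCard_eq_pow_finrank (K := F), Nat.card_eq_fintype_card]
  congr 1
  omega

section Incidences

open scoped Classical

variable {F V ι : Type*} [Field F] [AddCommGroup V] [Module F V] [Fintype ι]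

theorem exists_finrank_eq_le_card_filter_mem {G : ι → V} (hG : Submodule.span F (Set.range G) = ⊤)
    {m : ℕ} (hm : m ≤ finrank F V) :
    ∃ P : Submodule F V, finrank F P = m ∧ m ≤ #{i | G i ∈ P} := by
  have := FiniteDimensional.span_of_finite F (Set.finite_range G)
  obtain ⟨t, ht, htcard, -, hli⟩ := Submodule.exists_finset_span_eq_linearIndepOn F (Set.range G)
  rw [hG, finrank_top] at htcard
  obtain ⟨T, hTt, hTcard⟩ := exists_subset_card_eq (htcard ▸ hm)
  refine ⟨Submodule.span F T, ?_, ?_⟩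
  · rw [finrank_span_finset_eq_card (hli.mono (by exact_mod_cast hTt)), hTcard]
  · have hT : T ⊆ image G {i | G i ∈ Submodule.span F T} := fun v hv ↦ by
      obtain ⟨i, rfl⟩ := ht (hTt hv)
      exact mem_image_of_mem G (by simpa using Submodule.subset_span hv)
    exact hTcard ▸ (card_le_card hT).trans card_image_le

variable [DecidableEq F]

theorem card_le_card_filter_apply_eq_zero_mul [Fintype F] {W : Submodule F (Dual F V)} [Fintype W]
    (v : V) : Fintype.card W ≤ #{φ : W | (φ : Dual F V) v = 0} * Fintype.card F := by
  let ev : W →+ F := ((Dual.eval F V v).comp W.subtype).toAddMonoidHom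
  have hker : Nat.card ev.ker = #{φ : W | (φ : Dual F V) v = 0} := by
    rw [← Fintype.card_subtype, ← Nat.card_eq_fintype_card]; rfl
  rw [← hker, ← Nat.card_eq_fintype_card, ← Nat.card_eq_fintype_card]
  exact ev.card_le_card_ker_mul_card

theorem sq_mul_add_mul_le_sum_card_filter [Fintype F] {P : Submodule F V}
    {W : Submodule F (Dual F V)} [Fintype W] (hWP : W ≤ P.dualAnnihilator)
    (hW : Fintype.card W = Fintype.card F ^ 2) (G : ι → V) :
    Fintype.card F ^ 2 * #{i | G i ∈ P} + Fintype.card F * #{i | G i ∉ P} ≤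
      ∑ φ : W, #{i | (φ : Dual F V) (G i) = 0} := by
  set q := Fintype.card F
  have hin : ∀ i ∈ ({i | G i ∈ P} : Finset ι), #{φ : W | (φ : Dual F V) (G i) = 0} = q ^ 2 := by
    intro i hi
    rw [filter_true_of_mem fun φ _ ↦ (Submodule.mem_dualAnnihilator _).mp (hWP φ.2) _
      (mem_filter.mp hi).2, card_univ, hW]
  have hout : ∀ i ∈ ({i | G i ∉ P} : Finset ι), q ≤ #{φ : W | (φ : Dual F V) (G i) = 0} := by
    intro i _
    have := card_le_card_filter_apply_eq_zero_mul (W := W) (G i)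
    rw [hW, sq] at this
    exact le_of_mul_le_mul_right this Fintype.card_pos
  calc q ^ 2 * #{i | G i ∈ P} + q * #{i | G i ∉ P}
      ≤ ∑ i ∈ {i | G i ∈ P}, #{φ : W | (φ : Dual F V) (G i) = 0} +
          ∑ i ∈ {i | G i ∉ P}, #{φ : W | (φ : Dual F V) (G i) = 0} := by
        rw [sum_congr rfl hin, sum_const, smul_eq_mul, mul_comm]
        simpa [mul_comm] using card_nsmul_le_sum _ _ q hout
    _ = ∑ φ : W, #{i | (φ : Dual F V) (G i) = 0} := by
        rw [sum_filter_add_sum_filter_not]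
        simp only [card_filter]
        exact sum_comm

theorem sum_card_filter_apply_eq_zero_add_le {W : Submodule F (Dual F V)} [Fintype W] (G : ι → V)
    {M : ℕ} (hM : ∀ φ : W, φ ≠ 0 → #{i | (φ : Dual F V) (G i) = 0} ≤ M) :
    ∑ φ : W, #{i | (φ : Dual F V) (G i) = 0} + M ≤ Fintype.card ι + Fintype.card W * M := by
  rw [← sum_erase_add _ _ (mem_univ 0)]
  have hrest := sum_le_card_nsmul (univ.erase 0) _ M fun φ hφ ↦ hM φ (ne_of_mem_erase hφ)
  rw [card_erase_of_mem (mem_univ _), card_univ, smul_eq_mul] at hrest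
  have hzero : #{i | ((0 : W) : Dual F V) (G i) = 0} = Fintype.card ι := by simp
  have hW : (Fintype.card W - 1) * M + M = Fintype.card W * M := by
    rw [← Nat.succ_mul, Nat.succ_eq_add_one, Nat.sub_add_cancel Fintype.card_pos]
  omega

end Incidences

theorem add_mul_le_of_sq_mul_add_mul_le {q a b c n M : ℕ} (hq : 2 ≤ q) (hca : c ≤ a)
    (hab : a + b = n) (h : q ^ 2 * a + q * b + M ≤ n + q ^ 2 * M) : n + q * c ≤ (q + 1) * M := by
  suffices (q - 1) * (n + q * a) ≤ (q - 1) * ((q + 1) * M) from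
    (Nat.add_le_add_left (Nat.mul_le_mul_left q hca) n).trans
      (Nat.le_of_mul_le_mul_left this (by omega))
  zify [hq.trans' one_le_two] at h hab ⊢
  nlinarith

/-- For `k ≥ 2`, every non-degenerate `[n,k,d]_q` code with Singleton defect `s`
has `n ≤ (s+1)(q+1) + k - 2`; that is, `m^s(k,q) ≤ (s+1)(q+1) + k - 2`. -/
theorem length_le_of_defect (F : Type*) [Field F] [Fintype F] [DecidableEq F]
    (n k d s : ℕ) (G : Fin n → Fin k → F)
    (hk : 2 ≤ k) (hG : IsCodePS F n k d G) (hs : d + k + s = n + 1) :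
    n + 2 ≤ (s + 1) * (Fintype.card F + 1) + k := by
  classical
  obtain ⟨-, -, hspan, hhyp, -⟩ := hG
  obtain ⟨P, hP, hPcount⟩ := exists_finrank_eq_le_card_filter_mem hspan (m := k - 2) (by simp)
  have : Finite P.dualAnnihilator := Module.finite_of_finite F
  let := Fintype.ofFinite P.dualAnnihilator
  have hW : Fintype.card P.dualAnnihilator = Fintype.card F ^ 2 := by
    rw [← Nat.card_eq_fintype_card, P.natCard_dualAnnihilator, hP, finrank_fin_fun]
    congr 1; omega
  have hlow := sq_mul_add_mul_le_sum_card_filter le_rfl hW G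
  have hup := sum_card_filter_apply_eq_zero_add_le (W := P.dualAnnihilator) G (M := k + s - 1)
    fun φ hφ ↦ by have := hhyp φ (by simpa using hφ); unfold hypCount at this; omega
  rw [Fintype.card_fin, hW] at hup
  have hsplit : #{i | G i ∈ P} + #{i | G i ∉ P} = n := by
    simpa using card_filter_add_card_filter_not (s := univ) (G · ∈ P)
  have hbound := add_mul_le_of_sq_mul_add_mul_le Fintype.one_lt_card hPcount hsplit
    ((Nat.add_le_add_right hlow _).trans hup)
  zify [hk, show 1 ≤ k + s by omega] at hbound ⊢
  linarith
end

section
/- Let G be a projective system corresponding to an [n,k,d]_q A^sMDS code with k ≥ 3, s > 0. If some (k−3)-flat Λ of PG(k−1,q) meets G in k−2+a points (counted with multiplicity), a ≥ 0, then n ≤ (s+1−a)(q+1) + k − 2 + a. -/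
open Module Finset
open scoped LinearAlgebra.Projectivization

namespace Submodule

variable {F V : Type*} [Field F] [AddCommGroup V] [Module F V] {W : Submodule F V}

theorem mem_comap_mkQ_submodule_mk {x : V} (hx : x ∉ W) :
    x ∈ (Projectivization.mk F (W.mkQ x) (by simpa using hx)).submodule.comap W.mkQ := by
  simp [Projectivization.submodule_mk, mem_span_singleton_self]

theorem comap_mkQ_submodule_lt_top (hW : 2 ≤ finrank F (V ⧸ W)) (ℓ : ℙ F (V ⧸ W)) :
    ℓ.submodule.comap W.mkQ < ⊤ := by
  have hℓ : ℓ.submodule ≠ ⊤ := fun h => by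
    have := ℓ.finrank_submodule
    rw [h, finrank_top] at this
    omega
  rw [lt_top_iff_ne_top, ← comap_top W.mkQ]
  exact fun h => hℓ (comap_injective_of_surjective W.mkQ_surjective h)

theorem exists_dual_ne_zero_comap_mkQ_submodule_le_ker (hW : 2 ≤ finrank F (V ⧸ W))
    (ℓ : ℙ F (V ⧸ W)) : ∃ φ : Dual F V, φ ≠ 0 ∧ ℓ.submodule.comap W.mkQ ≤ LinearMap.ker φ := by
  obtain ⟨φ, hφ, hmap⟩ := exists_dual_map_eq_bot_of_lt_top (comap_mkQ_submodule_lt_top hW ℓ)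
    inferInstance
  exact ⟨φ, hφ, LinearMap.le_ker_iff_map.mpr hmap⟩

variable [DecidableEq F] [DecidablePred (· ∈ W)] {ι : Type*} [Fintype ι] (G : ι → V)

open Classical in
theorem card_filter_mem_add_card_filter_comap_le (hW : 2 ≤ finrank F (V ⧸ W)) {m : ℕ}
    (hbound : ∀ φ : Dual F V, φ ≠ 0 → W ≤ LinearMap.ker φ → #{i | φ (G i) = 0} ≤ m)
    (ℓ : ℙ F (V ⧸ W)) :
    #{i | G i ∈ W} + #{i | G i ∈ ℓ.submodule.comap W.mkQ ∧ G i ∉ W} ≤ m := by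
  set P := ℓ.submodule.comap W.mkQ
  have hWP : W ≤ P := fun x hx => by simp [P, (Quotient.mk_eq_zero W).mpr hx]
  obtain ⟨φ, hφ, hPφ⟩ := exists_dual_ne_zero_comap_mkQ_submodule_le_ker hW ℓ
  calc #{i | G i ∈ W} + #{i | G i ∈ P ∧ G i ∉ W}
      = #{i | G i ∈ P} := by
        rw [← card_filter_add_card_filter_not (s := {i | G i ∈ P}) (fun i => G i ∈ W),
          filter_filter, filter_filter]
        congr 2
        ext i
        simpa using fun h => hWP h
    _ ≤ #{i | φ (G i) = 0} := card_le_card (monotone_filter_right _ fun _ _ h => hPφ h)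
    _ ≤ m := hbound φ hφ (hWP.trans hPφ)

theorem card_filter_notMem_le [Finite V] (hW : 2 ≤ finrank F (V ⧸ W)) {m : ℕ}
    (hbound : ∀ φ : Dual F V, φ ≠ 0 → W ≤ LinearMap.ker φ → #{i | φ (G i) = 0} ≤ m) :
    #{i | G i ∉ W} ≤ Nat.card (ℙ F (V ⧸ W)) * (m - #{i | G i ∈ W}) := by
  classical
  have : Finite (V ⧸ W) := Finite.of_surjective W.mkQ W.mkQ_surjective
  have := Fintype.ofFinite (ℙ F (V ⧸ W))
  let fiber : ℙ F (V ⧸ W) → Finset ι := fun ℓ => {i | G i ∈ ℓ.submodule.comap W.mkQ ∧ G i ∉ W}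
  have hcover : ({i | G i ∉ W} : Finset ι) ⊆ univ.biUnion fiber := fun i hi => by
    have hiW : G i ∉ W := (mem_filter.mp hi).2
    exact mem_biUnion.mpr
      ⟨_, mem_univ _, mem_filter.mpr ⟨mem_univ _, mem_comap_mkQ_submodule_mk hiW, hiW⟩⟩
  calc #{i | G i ∉ W} ≤ ∑ ℓ, #(fiber ℓ) := (card_le_card hcover).trans card_biUnion_le
    _ ≤ #(univ : Finset (ℙ F (V ⧸ W))) • (m - #{i | G i ∈ W}) := sum_le_card_nsmul _ _ _
        fun ℓ _ => le_tsub_of_add_le_left (card_filter_mem_add_card_filter_comap_le G hW hbound ℓ)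
    _ = Nat.card (ℙ F (V ⧸ W)) * (m - #{i | G i ∈ W}) := by
        rw [smul_eq_mul, card_univ, Nat.card_eq_fintype_card]

end Submodule

theorem flat_meeting_bound_general (F : Type*) [Field F] [Fintype F] [DecidableEq F]
    (n k d s a : ℕ) (G : Fin n → Fin k → F)
    (hk : 3 ≤ k)
    (hG : IsCodePS F n k d G) (hs : d + k + s = n + 1)
    (W : Submodule F (Fin k → F)) (hW : Module.finrank F ↥W = k - 2)
    (hmeet : Nat.card {i : Fin n // G i ∈ W} = k - 2 + a) :
    n + 2 ≤ (s + 1 - a) * (Fintype.card F + 1) + k + a := by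
  classical
  obtain ⟨-, -, -, hbound, -⟩ := hG
  have hcodim : finrank F ((Fin k → F) ⧸ W) = 2 := by
    have := W.finrank_quotient_add_finrank
    rw [finrank_fin_fun] at this
    omega
  have hA : #{i | G i ∈ W} = k - 2 + a := by
    rw [← hmeet, Nat.card_eq_fintype_card, Fintype.card_subtype]
  have hB := W.card_filter_notMem_le G hcodim.ge (m := n - d) fun φ hφ _ => by
    have := hbound φ hφ
    unfold hypCount at this
    omega
  have hAB := card_filter_add_card_filter_not (s := univ) fun i => G i ∈ W
  rw [Projectivization.card_of_finrank_two F _ hcodim, Nat.card_eq_fintype_card, hA,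
    show n - d - (k - 2 + a) = s + 1 - a by omega, mul_comm] at hB
  simp only [card_univ, Fintype.card_fin] at hAB
  omega

/-- If a `(k-3)`-flat `Λ` (a linear subspace `W` of dimension `k-2`) meets the
projective system of an `[n,k,d]_q` A^sMDS code, `k ≥ 3`, `s > 0`, in `k-2+a` points
(with multiplicity), then `n ≤ (s+1-a)(q+1) + k - 2 + a`. -/
theorem flat_meeting_bound (F : Type*) [Field F] [Fintype F] [DecidableEq F]
    (n k d s a : ℕ) (G : Fin n → Fin k → F)
    (hk : 3 ≤ k) (hspos : 0 < s)
    (hG : IsCodePS F n k d G) (hs : d + k + s = n + 1)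
    (W : Submodule F (Fin k → F)) (hW : Module.finrank F ↥W = k - 2)
    (hmeet : Nat.card {i : Fin n // G i ∈ W} = k - 2 + a) :
    n + 2 ≤ (s + 1 - a) * (Fintype.card F + 1) + k + a :=
  flat_meeting_bound_general F n k d s a G hk hG hs W hW hmeet
end

section
/- If k ≥ 3 and s ≥ α(q+1) − 1 for some integer α ≥ 0, then m^s(k,q) ≤ (s+1−α)(q+1) + k − 2 + α. In particular, if s ≥ q then m^s(k,q) ≤ s(q+1) + k − 1. -/
/-!
Fix a secant hyperplane `ker φ₀`, carrying the maximal number `m = k + s - 1` of points, and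
`k - 3` of its points `J`. The functionals vanishing on `J` form a space of dimension at least 3
containing `φ₀`; extend `φ₀` to an independent triple `φ₀, ψ, χ` there. Summing over the pencil of
`q + 1` hyperplanes through `ker ψ ∩ ker χ ⊇ J`, each point of `ker φ₀` is counted once, and
`q + 1` times if it lies in `ker ψ ∩ ker χ`; so some member `ker ψ'` of that pencil meets
`ker φ₀` in at least `k - 2 + α` points. Summing instead over the pencil through the codimension-2
space `ker φ₀ ∩ ker ψ'`, whose members carry at most `m` points each, gives
`n + q (k - 2 + α) ≤ (q + 1) m`, which rearranges to the bound.
-/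

open Finset Module

section Pencil

variable {F V : Type*} [Field F] [AddCommGroup V] [Module F V]

/-- The `q + 1` hyperplanes through `ker φ ∩ ker ψ`, one functional for each point of the
projective line, indexed by `Option F`. -/
def pencil (φ ψ : Dual F V) : Option F → Dual F V
  | none => ψ
  | some c => φ + c • ψ

lemma pencil_mem_span (φ ψ : Dual F V) (o : Option F) :
    pencil φ ψ o ∈ Submodule.span F (Set.range ![φ, ψ]) := by
  rw [Matrix.range_cons, Matrix.range_cons, Matrix.range_empty, Set.union_empty]
  cases o with
  | none => exact Submodule.subset_span (by simp [pencil])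
  | some c => exact Submodule.mem_span_pair.mpr ⟨1, c, by simp [pencil]⟩

lemma pencil_ne_zero {φ ψ : Dual F V} (h : LinearIndependent F ![φ, ψ]) (o : Option F) :
    pencil φ ψ o ≠ 0 := by
  rw [LinearIndependent.pair_iff] at h
  intro h0
  cases o with
  | none => simpa using h 0 1 (by simpa [pencil] using h0)
  | some c => simpa using h 1 c (by simpa [pencil] using h0)

lemma linearIndependent_pencil {φ ψ χ : Dual F V} (h : LinearIndependent F ![φ, ψ, χ])
    (o : Option F) : LinearIndependent F ![φ, pencil ψ χ o] := by
  rw [Matrix.vecCons, linearIndependent_finCons] at h ⊢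
  obtain ⟨hψχ, hφ⟩ := h
  refine ⟨linearIndependent_unique_iff.mpr (pencil_ne_zero hψχ o), fun hmem => hφ ?_⟩
  refine Submodule.span_le.mpr ?_ hmem
  simpa using pencil_mem_span ψ χ o

variable [Fintype F] [DecidableEq F]

lemma card_filter_pencil_apply_eq_zero (φ ψ : Dual F V) (x : V) :
    #{o | pencil φ ψ o x = 0} = if φ x = 0 ∧ ψ x = 0 then Fintype.card F + 1 else 1 := by
  rw [card_filter, Fintype.sum_option]
  by_cases hψ : ψ x = 0
  · by_cases hφ : φ x = 0 <;> simp [pencil, hφ, hψ, add_comm]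
  · have hroot : ∀ c : F, φ x + c * ψ x = 0 ↔ c = -φ x / ψ x := fun c => by
      rw [eq_div_iff hψ]; constructor <;> intro h <;> linear_combination h
    simp [pencil, hψ, hroot]

variable {ι : Type*}

lemma sum_card_filter_pencil (G : ι → V) (A : Finset ι) (φ ψ : Dual F V) :
    ∑ o, #{i ∈ A | pencil φ ψ o (G i) = 0} =
      #A + Fintype.card F * #{i ∈ A | φ (G i) = 0 ∧ ψ (G i) = 0} := by
  calc ∑ o, #{i ∈ A | pencil φ ψ o (G i) = 0}
      = ∑ i ∈ A, #{o | pencil φ ψ o (G i) = 0} :=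
        sum_card_bipartiteAbove_eq_sum_card_bipartiteBelow _
    _ = ∑ i ∈ A, (1 + Fintype.card F * if φ (G i) = 0 ∧ ψ (G i) = 0 then 1 else 0) := by
        refine sum_congr rfl fun i _ => ?_
        rw [card_filter_pencil_apply_eq_zero]
        split_ifs <;> ring
    _ = _ := by rw [sum_add_distrib, ← mul_sum, ← card_filter]; simp

lemma exists_le_card_filter_pencil {G : ι → V} {A : Finset ι} {φ ψ : Dual F V} {t a : ℕ}
    (ht : t ≤ #{i ∈ A | φ (G i) = 0 ∧ ψ (G i) = 0}) (hA : a * (Fintype.card F + 1) + t < #A) :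
    ∃ o, t + 1 + a ≤ #{i ∈ A | pencil φ ψ o (G i) = 0} := by
  suffices ∑ _o : Option F, (t + a) < ∑ o, #{i ∈ A | pencil φ ψ o (G i) = 0} by
    obtain ⟨o, -, ho⟩ := exists_lt_of_sum_lt this
    exact ⟨o, by omega⟩
  rw [sum_const, card_univ, Fintype.card_option, smul_eq_mul, sum_card_filter_pencil]
  nlinarith

lemma card_add_mul_le_of_pencil [Fintype ι] {G : ι → V} {φ ψ : Dual F V} {m r : ℕ}
    (hm : ∀ o, #{i | pencil φ ψ o (G i) = 0} ≤ m)
    (hr : r ≤ #{i | φ (G i) = 0 ∧ ψ (G i) = 0}) :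
    Fintype.card ι + Fintype.card F * r ≤ (Fintype.card F + 1) * m := by
  calc Fintype.card ι + Fintype.card F * r
      ≤ ∑ o, #{i | pencil φ ψ o (G i) = 0} := by
        rw [sum_card_filter_pencil, card_univ]; gcongr
    _ ≤ ∑ _o : Option F, m := sum_le_sum fun o _ => hm o
    _ = (Fintype.card F + 1) * m := by simp

end Pencil

lemma exists_linearIndependent_vanishing {F V ι : Type*} [Field F] [AddCommGroup V] [Module F V]
    [FiniteDimensional F V] (v : ι → V) (J : Finset ι) (hJ : #J + 3 ≤ finrank F V)
    {φ : Dual F V} (hφ : φ ≠ 0) (hφJ : ∀ j ∈ J, φ (v j) = 0) :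
    ∃ ψ χ : Dual F V, (∀ j ∈ J, ψ (v j) = 0 ∧ χ (v j) = 0) ∧ LinearIndependent F ![φ, ψ, χ] := by
  classical
  have hW : finrank F (Submodule.span F (v '' J)) ≤ #J := by
    rw [← coe_image]; exact (finrank_span_finset_le_card _).trans card_image_le
  have hdim := Subspace.finrank_add_finrank_dualAnnihilator_eq (Submodule.span F (v '' J))
  set U := (Submodule.span F (v '' J)).dualAnnihilator
  have mem_U : ∀ ρ : Dual F V, ρ ∈ U ↔ ∀ j ∈ J, ρ (v j) = 0 := fun ρ => by
    rw [← SetLike.mem_coe, Submodule.coe_dualAnnihilator_span]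
    simp [Set.subset_def]
  let φ' : U := ⟨φ, (mem_U φ).mpr hφJ⟩
  have h1 := LinearIndependent.of_subsingleton (R := F) (v := ![φ']) 0
    fun h => hφ (congrArg Subtype.val h :)
  obtain ⟨ψ, h2⟩ := exists_linearIndependent_snoc_of_lt_finrank h1 (by omega)
  obtain ⟨χ, h3⟩ := exists_linearIndependent_snoc_of_lt_finrank h2 (by omega)
  refine ⟨ψ, χ, fun j hj => ⟨(mem_U ψ).mp ψ.2 j hj, (mem_U χ).mp χ.2 j hj⟩, ?_⟩
  have hfun : U.subtype ∘ Fin.snoc (Fin.snoc ![φ'] ψ) χ = ![φ, ↑ψ, ↑χ] := by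
    ext i : 1
    fin_cases i <;> rfl
  simpa only [hfun] using h3.map' U.subtype (Submodule.ker_subtype U)

theorem card_add_mul_le_of_secant {F V ι : Type*} [Field F] [Fintype F] [DecidableEq F]
    [AddCommGroup V] [Module F V] [FiniteDimensional F V] [Fintype ι] {G : ι → V} {m t a : ℕ}
    (hbound : ∀ φ : Dual F V, φ ≠ 0 → #{i | φ (G i) = 0} ≤ m)
    {φ₀ : Dual F V} (hφ₀ : φ₀ ≠ 0) (hsec : #{i | φ₀ (G i) = 0} = m)
    (ht : t + 3 ≤ finrank F V) (ha : a * (Fintype.card F + 1) + t < m) :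
    Fintype.card ι + Fintype.card F * (t + 1 + a) ≤ (Fintype.card F + 1) * m := by
  set I₀ : Finset ι := {i | φ₀ (G i) = 0}
  obtain ⟨J, hJI₀, hJ⟩ := exists_subset_card_eq (s := I₀) (n := t) (by omega)
  obtain ⟨ψ, χ, hψχJ, hind⟩ :=
    exists_linearIndependent_vanishing G J (by omega) hφ₀ fun j hj => (mem_filter.mp (hJI₀ hj)).2
  have hJ_sub : J ⊆ {i ∈ I₀ | ψ (G i) = 0 ∧ χ (G i) = 0} := fun j hj =>
    mem_filter.mpr ⟨hJI₀ hj, hψχJ j hj⟩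
  obtain ⟨o, ho⟩ := exists_le_card_filter_pencil (a := a) (hJ ▸ card_le_card hJ_sub) (by omega)
  refine card_add_mul_le_of_pencil (φ := φ₀) (ψ := pencil ψ χ o) (fun o' => hbound _ ?_) ?_
  · exact pencil_ne_zero (linearIndependent_pencil hind o) o'
  · simpa only [I₀, filter_filter] using ho

theorem IsCodePS.length_add_two_le {F : Type*} [Field F] [Fintype F] [DecidableEq F] {n k d s a : ℕ}
    {G : Fin n → Fin k → F} (hG : IsCodePS F n k d G) (hk : 3 ≤ k) (hs : d + k + s = n + 1)
    (ha : a * (Fintype.card F + 1) ≤ s + 1) :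
    n + 2 ≤ (s + 1 - a) * (Fintype.card F + 1) + k + a := by
  obtain ⟨-, -, -, hbound, φ₀, hφ₀, hsec⟩ := hG
  have ha_le : a ≤ a * (Fintype.card F + 1) := Nat.le_mul_of_pos_right a (Nat.succ_pos _)
  obtain ⟨b, hb⟩ : ∃ b, a + b = s + 1 := ⟨s + 1 - a, by omega⟩
  obtain ⟨t, rfl⟩ : ∃ t, k = t + 3 := ⟨k - 3, by omega⟩
  have key := card_add_mul_le_of_secant (G := G) (m := t + 1 + a + b) (t := t) (a := a)
    (fun φ hφ => by have := hbound φ hφ; unfold hypCount at this; omega) hφ₀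
    (by unfold hypCount at hsec; omega) (by simp) (by omega)
  rw [Fintype.card_fin] at key
  rw [show s + 1 - a = b by omega]
  nlinarith

/-- If `k ≥ 3` and `s ≥ α(q+1) - 1` for an integer `α ≥ 0`, then
`m^s(k,q) ≤ (s+1-α)(q+1) + k - 2 + α`. In particular, if `s ≥ q` then
`m^s(k,q) ≤ s(q+1) + k - 1`. -/
theorem mPar_big_defect_bound (F : Type*) [Field F] [Fintype F] [DecidableEq F]
    (k s : ℕ) (hk : 3 ≤ k) :
    (∀ α : ℕ, α * (Fintype.card F + 1) ≤ s + 1 →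
      mPar F s k + 2 ≤ (s + 1 - α) * (Fintype.card F + 1) + k + α) ∧
    (Fintype.card F ≤ s → mPar F s k + 1 ≤ s * (Fintype.card F + 1) + k) := by
  have bound : ∀ α : ℕ, α * (Fintype.card F + 1) ≤ s + 1 →
      mPar F s k + 2 ≤ (s + 1 - α) * (Fintype.card F + 1) + k + α := by
    intro α hα
    suffices mPar F s k ≤ (s + 1 - α) * (Fintype.card F + 1) + k + α - 2 by omega
    refine csSup_le' fun n ⟨d, G, hG, hs⟩ => ?_
    have := hG.length_add_two_le hk hs hα
    omega
  refine ⟨bound, fun _ => ?_⟩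
  have := bound 1 (by omega)
  rw [Nat.add_sub_cancel] at this
  omega
end

section
/- If k ≥ 3 and an [n,k,d]_q A^sMDS code has minimum distance d > α(q²+q) − q for some integer α ≥ 0, then n ≤ (s+1−α)(q+1) + k − 2 + α. In particular, if d > q² then n ≤ s(q+1) + k − 1. -/
/-!
Let `H₁` be a secant hyperplane, carrying `n - d` points. Choose a subspace `L ⊂ H₁` of
codimension 2 carrying the largest number `m₁` of points, and inside `L` a subspace of
codimension 3 carrying `m₂ ≥ k - 3` points (it exists by a dimension count). Counting the
points over the `q + 1` hyperplanes through `L`, each carrying at most `n - d` points, gives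
`d ≤ q d₁` with `d₁ = n - d - m₁`; counting the points of `H₁` over the `q + 1` subspaces of
`H₁` through the codimension 3 subspace, each carrying at most `m₁` points by maximality, gives
`d₁ ≤ q d₂` with `d₂ = m₁ - m₂`. Now `d₁ + d₂ ≤ s + 2`, and `d > α(q² + q) - q` forces
`d₂ ≥ α + 1`, so `d ≤ q d₁ ≤ q (s + 1 - α)`.
-/

open Finset Module

section Pencil

variable {F V ι : Type*} [Field F] [DecidableEq F] [AddCommGroup V] [Module F V]

def kerPoints (G : ι → V) (S : Finset ι) (φ : V →ₗ[F] F) : Finset ι :=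
  {i ∈ S | φ (G i) = 0}

/- For a point `x` with `a = φ x`, `b = ψ x`: `x` lies on exactly one member of the pencil
`{ker φ} ∪ {ker (ψ + t • φ) | t : F}`, or on all `q + 1` of them if `φ x = ψ x = 0`. -/
theorem pencil_incidence [Fintype F] (a b : F) :
    (∑ t : F, if b + t * a = 0 then 1 else 0) + (if a = 0 then 1 else 0) =
      1 + Fintype.card F * if a = 0 ∧ b = 0 then 1 else 0 := by
  by_cases ha : a = 0
  · by_cases hb : b = 0 <;> simp [ha, hb, add_comm]
  · have hroot : ∀ t : F, b + t * a = 0 ↔ t = -b / a := fun t => by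
      rw [eq_div_iff ha]
      constructor <;> intro h <;> linear_combination h
    simp [hroot, ha]

theorem sum_card_kerPoints_pencil [Fintype F] (G : ι → V) (S : Finset ι) (φ ψ : V →ₗ[F] F) :
    ∑ t : F, #(kerPoints G S (ψ + t • φ)) + #(kerPoints G S φ) =
      #S + Fintype.card F * #(kerPoints G (kerPoints G S φ) ψ) := by
  simp only [kerPoints, card_filter, filter_filter, LinearMap.add_apply, LinearMap.smul_apply,
    smul_eq_mul]
  rw [sum_comm, ← sum_add_distrib, card_eq_sum_ones, mul_sum, ← sum_add_distrib]
  exact sum_congr rfl fun i _ => pencil_incidence (φ (G i)) (ψ (G i))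

theorem card_add_mul_card_kerPoints_le [Fintype F] {G : ι → V} {T : Finset ι}
    {Q : Submodule F (V →ₗ[F] F)} {φ ψ : V →ₗ[F] F}
    (hφ : ∀ χ ∉ Q, #(kerPoints G T χ) ≤ #(kerPoints G T φ)) (hψ : ψ ∉ Q ⊔ F ∙ φ) :
    #T + Fintype.card F * #(kerPoints G (kerPoints G T φ) ψ) ≤
      (Fintype.card F + 1) * #(kerPoints G T φ) := by
  have hpencil : ∀ t : F, ψ + t • φ ∉ Q := fun t h => hψ <| by
    simpa using Submodule.sub_mem _ (Submodule.mem_sup_left h)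
      (Submodule.mem_sup_right (Submodule.smul_mem _ t (Submodule.mem_span_singleton_self φ)))
  have hsum : ∑ t : F, #(kerPoints G T (ψ + t • φ)) ≤ Fintype.card F * #(kerPoints G T φ) :=
    (sum_le_sum fun t _ => hφ _ (hpencil t)).trans_eq
      (by rw [sum_const, card_univ, smul_eq_mul])
  linarith [sum_card_kerPoints_pencil G T φ ψ]

variable [FiniteDimensional F V]

theorem exists_notMem_le_card_kerPoints (G : ι → V) {T : Finset ι}
    {Q : Submodule F (V →ₗ[F] F)} {r : ℕ} (hr : finrank F Q + r < finrank F V) (hT : r ≤ #T) :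
    ∃ ψ ∉ Q, r ≤ #(kerPoints G T ψ) := by
  classical
  obtain ⟨T', hT'T, rfl⟩ := exists_subset_card_eq hT
  set U := Submodule.span F (T'.image G : Set V)
  have hU : finrank F U ≤ #T' := (finrank_span_finset_le_card _).trans card_image_le
  have hnle : ¬ U.dualAnnihilator ≤ Q := fun hle => by
    have : finrank F U.dualAnnihilator ≤ finrank F Q := Submodule.finrank_mono hle
    have := Subspace.finrank_add_finrank_dualAnnihilator_eq U
    omega
  obtain ⟨ψ, hψU, hψQ⟩ := SetLike.not_le_iff_exists.mp hnle
  refine ⟨ψ, hψQ, card_le_card fun i hi => mem_filter.mpr ⟨hT'T hi, ?_⟩⟩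
  exact (Submodule.mem_dualAnnihilator ψ).mp hψU _ (Submodule.subset_span (mem_image_of_mem G hi))

theorem exists_forall_card_kerPoints_le [Finite F] (G : ι → V) (T : Finset ι)
    {Q : Submodule F (V →ₗ[F] F)} {ψ : V →ₗ[F] F} (hψ : ψ ∉ Q) :
    ∃ φ ∉ Q, ∀ χ ∉ Q, #(kerPoints G T χ) ≤ #(kerPoints G T φ) :=
  have := Module.finite_of_finite F (M := V →ₗ[F] F)
  Set.exists_max_image {χ | χ ∉ Q} _ (Set.toFinite _) ⟨ψ, hψ⟩

end Pencil

theorem sub_le_mul_sub_of_add_mul_le {a b c q : ℕ} (hcb : c ≤ b) (h : a + q * c ≤ (q + 1) * b) :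
    a - b ≤ q * (b - c) := by
  rw [add_one_mul] at h
  rw [Nat.mul_sub]
  have := Nat.mul_le_mul_left q hcb
  omega

theorem IsCodePS.exists_defect_chain {F : Type*} [Field F] [Fintype F] [DecidableEq F]
    {n k d s : ℕ} {G : Fin n → Fin k → F} (hk : 3 ≤ k) (hG : IsCodePS F n k d G)
    (hs : d + k + s = n + 1) :
    ∃ d₁ d₂ : ℕ, d ≤ Fintype.card F * d₁ ∧ d₁ ≤ Fintype.card F * d₂ ∧ d₁ + d₂ ≤ s + 2 := by
  obtain ⟨-, -, -, hmax, φ₁, hφ₁, hsec⟩ := hG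
  set S₁ := kerPoints G univ φ₁
  have hS₁ : #S₁ + d = n := hsec
  have hφ₁max : ∀ χ ∉ (⊥ : Submodule F _), #(kerPoints G univ χ) ≤ #S₁ := fun χ hχ => by
    have : hypCount G χ + d ≤ n := hmax χ (by simpa using hχ)
    exact (by omega : hypCount G χ ≤ #S₁)
  have hrank₁ : finrank F (F ∙ φ₁) = 1 := finrank_span_singleton hφ₁
  obtain ⟨ψ₀, hψ₀, hm₀⟩ := exists_notMem_le_card_kerPoints G (T := S₁) (r := k - 2)
    (by rw [hrank₁, finrank_fin_fun]; omega) (by omega)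
  obtain ⟨ψ₁, hψ₁, hψ₁max⟩ := exists_forall_card_kerPoints_le G S₁ hψ₀
  set S₂ := kerPoints G S₁ ψ₁
  have hψ₁ne : ψ₁ ≠ 0 := fun h => hψ₁ (h ▸ zero_mem _)
  have hrank₂ : finrank F ↥((F ∙ φ₁) ⊔ F ∙ ψ₁) ≤ 2 :=
    (Submodule.finrank_add_le_finrank_add_finrank _ _).trans
      (by rw [hrank₁, finrank_span_singleton hψ₁ne])
  obtain ⟨χ, hχ, hm₂⟩ := exists_notMem_le_card_kerPoints G (T := S₂) (Q := (F ∙ φ₁) ⊔ F ∙ ψ₁)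
    (r := k - 3) (by rw [finrank_fin_fun]; omega) (by have := hψ₁max ψ₀ hψ₀; omega)
  have R₁ := card_add_mul_card_kerPoints_le hφ₁max (by rwa [bot_sup_eq])
  have R₂ := card_add_mul_card_kerPoints_le hψ₁max hχ
  have h₂₁ : #S₂ ≤ #S₁ := card_filter_le _ _
  have h₃₂ : #(kerPoints G S₂ χ) ≤ #S₂ := card_filter_le _ _
  refine ⟨#S₁ - #S₂, #S₂ - #(kerPoints G S₂ χ), ?_, ?_, by omega⟩
  · rw [card_univ, Fintype.card_fin] at R₁
    have := sub_le_mul_sub_of_add_mul_le h₂₁ R₁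
    omega
  · exact sub_le_mul_sub_of_add_mul_le h₃₂ R₂

theorem succ_le_of_defect_chain {q d d₁ d₂ α : ℕ} (hd : 0 < d) (h₁ : d ≤ q * d₁)
    (h₂ : d₁ ≤ q * d₂) (hα : α * (q ^ 2 + q) < d + q) : α + 1 ≤ d₂ := by
  have hαd₁ : α * (q + 1) ≤ d₁ :=
    Nat.lt_succ_iff.mp <| Nat.lt_of_mul_lt_mul_left (a := q) (by nlinarith)
  have hd₂ : 0 < d₂ := Nat.pos_of_ne_zero fun h => by simp [h] at h₂; simp [h₂] at h₁; omega
  by_contra! h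
  nlinarith [Nat.mul_le_mul_left q (Nat.le_of_lt_succ h)]

/-- If `k ≥ 3` and an `[n,k,d]_q` A^sMDS code has minimum distance
`d > α(q²+q) - q` for an integer `α ≥ 0`, then `n ≤ (s+1-α)(q+1) + k - 2 + α`.
In particular, if `d > q²` then `n ≤ s(q+1) + k - 1`. -/
theorem big_distance_short_code (F : Type*) [Field F] [Fintype F] [DecidableEq F]
    (n k d s : ℕ) (G : Fin n → Fin k → F)
    (hk : 3 ≤ k) (hG : IsCodePS F n k d G) (hs : d + k + s = n + 1) :
    (∀ α : ℕ, α * (Fintype.card F ^ 2 + Fintype.card F) < d + Fintype.card F →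
      n + 2 ≤ (s + 1 - α) * (Fintype.card F + 1) + k + α) ∧
    (Fintype.card F ^ 2 < d → n + 1 ≤ s * (Fintype.card F + 1) + k) := by
  obtain ⟨d₁, d₂, h₁, h₂, h₁₂⟩ := hG.exists_defect_chain hk hs
  have bound : ∀ α : ℕ, α * (Fintype.card F ^ 2 + Fintype.card F) < d + Fintype.card F →
      n + 2 ≤ (s + 1 - α) * (Fintype.card F + 1) + k + α := fun α hα => by
    have hd₂ := succ_le_of_defect_chain hG.1 h₁ h₂ hα
    have hd : d ≤ Fintype.card F * (s + 1 - α) := h₁.trans (Nat.mul_le_mul_left _ (by omega))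
    rw [mul_add_one, mul_comm]
    omega
  refine ⟨bound, fun hd => ?_⟩
  have := bound 1 (by linarith)
  rw [Nat.add_sub_cancel] at this
  omega
end

section
/- Let G be a non-degenerate [n,k,d]_q A^sMDS code with dual an A^tMDS code, d > 1, s ≥ 1, t ≥ 1. If t > 1 then n ≤ s(q+1) + k − 1; symmetrically, if s > 1 then k ≤ t(q+1) − 1. -/
/-- The dual code of the code with projective system `G` has minimum distance `w`:
every subfamily of fewer than `w` points is linearly independent, and some
subfamily of `w` points is linearly dependent. -/
def HasDualDist (F : Type*) [Field F] {n k : ℕ} (G : Fin n → Fin k → F) (w : ℕ) : Prop :=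
  (∀ S : Finset (Fin n), S.card < w → LinearIndependent F (fun i : {x // x ∈ S} => G i.1)) ∧
  (∃ S : Finset (Fin n), S.card = w ∧ ¬ LinearIndependent F (fun i : {x // x ∈ S} => G i.1))



open Finset Module

section aux

variable {F : Type*} [Field F] [DecidableEq F]

/-- Core double counting over the `q+1` lines of a pencil. -/
lemma core_count [Fintype F] {n d : ℕ} (x y : Fin n → F)
    (hbound : ∀ α β : F, ¬(α = 0 ∧ β = 0) →
      (Finset.univ.filter fun i => α * x i + β * y i = 0).card + d ≤ n) :
    (Fintype.card F + 1) * d +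
      Fintype.card F * (Finset.univ.filter fun i => x i = 0 ∧ y i = 0).card
      ≤ Fintype.card F * n := by
  classical
  set q := Fintype.card F with hq
  set a := (Finset.univ.filter fun i => x i = 0 ∧ y i = 0).card with ha
  set cond : Option F → Fin n → Prop := fun o i =>
    o.elim (x i = 0) (fun β => β * x i + y i = 0) with hcond
  have key : ∀ o : Option F, (Finset.univ.filter (cond o)).card + d ≤ n := by
    intro o
    match o with
    | none =>
        have h := hbound 1 0 (by simp)
        simpa [hcond] using h
    | some β =>
        have h := hbound β 1 (by simp)
        simpa [hcond] using h
  have count_i : ∀ i, (Finset.univ.filter fun o : Option F => cond o i).card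
      = if x i = 0 ∧ y i = 0 then q + 1 else 1 := by
    intro i
    by_cases hx : x i = 0
    · by_cases hy : y i = 0
      · rw [if_pos ⟨hx, hy⟩, Finset.filter_true_of_mem]
        · simp [hq]
        · intro o _
          match o with
          | none => simpa [hcond] using hx
          | some β => simp [hcond, hx, hy]
      · rw [if_neg (by tauto)]
        have : (Finset.univ.filter fun o : Option F => cond o i) = {none} := by
          ext o
          match o with
          | none => simp [hcond, hx]
          | some β => simp [hcond, hx, hy]
        rw [this]; simp
    · rw [if_neg (by tauto)]
      have hiff : ∀ β : F, (β * x i + y i = 0) ↔ β = -y i / x i := by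
        intro β
        rw [eq_div_iff hx, add_eq_zero_iff_eq_neg]
      have : (Finset.univ.filter fun o : Option F => cond o i) = {some (-y i / x i)} := by
        ext o
        match o with
        | none => simp [hcond, hx]
        | some β => simp [hcond, hiff β]
      rw [this]; simp
  have hdouble : ∑ o : Option F, (Finset.univ.filter (cond o)).card = q * a + n := by
    have h1 : ∑ o : Option F, (Finset.univ.filter (cond o)).card
        = ∑ o : Option F, ∑ i : Fin n, if cond o i then 1 else 0 := by
      refine Finset.sum_congr rfl fun o _ => ?_
      exact Finset.card_filter _ _
    rw [h1, Finset.sum_comm]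
    have h2 : ∀ i : Fin n, ∑ o : Option F, (if cond o i then 1 else 0)
        = if x i = 0 ∧ y i = 0 then q + 1 else 1 := by
      intro i
      rw [← Finset.card_filter]
      exact count_i i
    rw [Finset.sum_congr rfl fun i _ => h2 i]
    have h3 : ∀ i : Fin n, (if x i = 0 ∧ y i = 0 then q + 1 else 1)
        = (if x i = 0 ∧ y i = 0 then q else 0) + 1 := by
      intro i; split <;> ring
    rw [Finset.sum_congr rfl fun i _ => h3 i, Finset.sum_add_distrib]
    simp [Finset.sum_ite, ha, mul_comm]
  have hle : ∑ o : Option F, (Finset.univ.filter (cond o)).card + (q + 1) * d ≤ (q + 1) * n := by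
    calc ∑ o : Option F, (Finset.univ.filter (cond o)).card + (q + 1) * d
        = ∑ o : Option F, ((Finset.univ.filter (cond o)).card + d) := by
          rw [Finset.sum_add_distrib]
          simp [hq, mul_comm]
      _ ≤ ∑ _o : Option F, n := Finset.sum_le_sum fun o _ => key o
      _ = (q + 1) * n := by simp [hq, mul_comm]
  rw [hdouble] at hle
  have hexp : (q + 1) * n = q * n + n := by ring
  linarith

lemma exists_indep_pair {V : Type*} [AddCommGroup V] [Module F V] [FiniteDimensional F V]
    (D : Submodule F V) (h2 : 2 ≤ finrank F D) :
    ∃ c c' : V, c ∈ D ∧ c' ∈ D ∧ ∀ α β : F, ¬(α = 0 ∧ β = 0) → α • c + β • c' ≠ 0 := by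
  let b := finBasis F ↥D
  have h0 : (0 : ℕ) < finrank F D := by omega
  have h1 : (1 : ℕ) < finrank F D := by omega
  set v0 : D := b ⟨0, h0⟩ with hv0
  set v1 : D := b ⟨1, h1⟩ with hv1
  refine ⟨v0, v1, v0.2, v1.2, ?_⟩
  intro α β hab hzero
  have hli : LinearIndependent F ![v0, v1] := by
    have hinj : Function.Injective ![(⟨0, h0⟩ : Fin (finrank F ↥D)), ⟨1, h1⟩] := by
      intro i j hij
      fin_cases i <;> fin_cases j <;> simp_all [Fin.ext_iff]
    have h := b.linearIndependent.comp _ hinj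
    have heq : ![v0, v1] = b ∘ ![⟨0, h0⟩, ⟨1, h1⟩] := by
      funext j; fin_cases j <;> simp [hv0, hv1]
    rw [heq]; exact h
  rw [LinearIndependent.pair_iff] at hli
  have hz : α • v0 + β • v1 = (0 : D) := Subtype.ext (by simpa using hzero)
  obtain ⟨hα, hβ⟩ := hli α β hz
  exact hab ⟨hα, hβ⟩

lemma dual_dist_le {n k : ℕ} {G : Fin n → Fin k → F} {w : ℕ}
    (h : ∀ S : Finset (Fin n), S.card < w →
      LinearIndependent F (fun i : {x // x ∈ S} => G i.1))
    (c : Fin n → F) (i0 : Fin n) (hc : c i0 ≠ 0) (hsum : ∑ i, c i • G i = 0) :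
    w ≤ (Finset.univ.filter fun i => c i ≠ 0).card := by
  by_contra hlt
  push_neg at hlt
  set S := Finset.univ.filter fun i => c i ≠ 0 with hS
  have hind := h S hlt
  rw [Fintype.linearIndependent_iff] at hind
  have hsum' : ∑ i : {x // x ∈ S}, c i.1 • G i.1 = 0 := by
    rw [Finset.sum_coe_sort S (fun i => c i • G i)]
    rw [Finset.sum_subset (Finset.subset_univ S) (fun i _ hiS => by
      have : ¬ c i ≠ 0 := by simpa [hS] using hiS
      simp [not_not.mp this])]
    exact hsum
  have := hind (fun i => c i.1) hsum' ⟨i0, by simp [hS, hc]⟩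
  exact hc this

end aux


open Finset Module

noncomputable def sumMap {F : Type*} [Field F] {k : ℕ} {ι : Type*} [Fintype ι]
    (v : ι → Fin k → F) : (ι → F) →ₗ[F] (Fin k → F) where
  toFun c := ∑ i, c i • v i
  map_add' c c' := by simp [add_smul, Finset.sum_add_distrib]
  map_smul' a c := by simp [Pi.smul_apply, smul_eq_mul, mul_smul, Finset.smul_sum]

/-- Let `G` be a non-degenerate `[n,k,d]_q` A^sMDS code with dual an A^tMDS code
(dual distance `d^⊥ = k + 1 - t`), `d > 1`, `s ≥ 1`, `t ≥ 1`. If `t > 1` then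
`n ≤ s(q+1) + k - 1`; symmetrically, if `s > 1` then `k ≤ t(q+1) - 1`. -/
theorem bound_AsMDS_AtMDS (F : Type*) [Field F] [Fintype F] [DecidableEq F]
    (n k d s t dperp : ℕ) (G : Fin n → Fin k → F)
    (hG : IsCodePS F n k d G) (hs : d + k + s = n + 1)
    (hdual : HasDualDist F G dperp) (ht : dperp + t = k + 1)
    (hd : 1 < d) (hs1 : 1 ≤ s) (ht1 : 1 ≤ t) :
    (1 < t → n + 1 ≤ s * (Fintype.card F + 1) + k) ∧
    (1 < s → k + 1 ≤ t * (Fintype.card F + 1)) := by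
  obtain ⟨hd0, hnz, hspan, hbd, φ₀, hφ₀ne, hφ₀⟩ := hG
  obtain ⟨hind, S, hScard, hSdep⟩ := hdual
  set q := Fintype.card F with hq
  have hdperp1 : 1 ≤ dperp := by
    by_contra h
    push_neg at h
    apply hSdep
    have hSempty : S = ∅ := Finset.card_eq_zero.mp (by omega)
    rw [Fintype.linearIndependent_iff]
    intro g _ i
    exact absurd i.2 (Finset.eq_empty_iff_forall_notMem.mp hSempty i.1)
  constructor
  · -- Claim 1
    intro ht2
    have hk2 : 2 ≤ k := by omega
    have hkn : k - 1 ≤ n := by omega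
    obtain ⟨S', hSS', hS'card⟩ := Finset.exists_superset_card_eq
      (s := S) (n := k - 1) (by omega) (by simpa using hkn)
    have hS'dep : ¬ LinearIndependent F (fun i : {x // x ∈ S'} => G i.1) := by
      intro h
      apply hSdep
      have hinj : Function.Injective
          (fun i : {x // x ∈ S} => (⟨i.1, hSS' i.2⟩ : {x // x ∈ S'})) := by
        intro a b hab
        simp only [Subtype.mk.injEq] at hab
        exact Subtype.ext hab
      exact h.comp _ hinj
    set U : Submodule F (Fin k → F) :=
      Submodule.span F (Set.range fun i : {x // x ∈ S'} => G i.1) with hU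
    have hUrank : finrank F U ≤ k - 2 := by
      have hcard : Fintype.card {x // x ∈ S'} = k - 1 := by
        rw [Fintype.card_coe, hS'card]
      have hle : finrank F U ≤ k - 1 := by
        have := finrank_range_le_card (R := F) (fun i : {x // x ∈ S'} => G i.1)
        rw [hcard] at this
        simpa [Set.finrank] using this
      have hne : finrank F U ≠ k - 1 := by
        intro heq
        apply hS'dep
        rw [linearIndependent_iff_card_eq_finrank_span, hcard]
        exact heq.symm
      omega
    have hann : 2 ≤ finrank F U.dualAnnihilator := by
      have e : finrank F ((Fin k → F) ⧸ U) = finrank F U.dualAnnihilator :=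
        LinearEquiv.finrank_eq (Subspace.quotEquivAnnihilator U)
      have hqr : finrank F ((Fin k → F) ⧸ U) + finrank F U = finrank F (Fin k → F) :=
        Submodule.finrank_quotient_add_finrank U
      rw [Module.finrank_fin_fun] at hqr
      omega
    obtain ⟨c, c', hc, hc', hpair⟩ := exists_indep_pair U.dualAnnihilator hann
    have hb2 : ∀ α β : F, ¬(α = 0 ∧ β = 0) →
        (Finset.univ.filter fun i => α * c (G i) + β * c' (G i) = 0).card + d ≤ n := by
      intro α β hab
      have hne : α • c + β • c' ≠ 0 := hpair α β hab
      have hb := hbd (α • c + β • c') hne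
      have heq : (Finset.univ.filter fun i => (α • c + β • c') (G i) = 0)
          = (Finset.univ.filter fun i => α * c (G i) + β * c' (G i) = 0) := by
        refine Finset.filter_congr fun i _ => ?_
        simp [LinearMap.add_apply, LinearMap.smul_apply, smul_eq_mul]
      rw [hypCount, heq] at hb
      exact hb
    have hcore := core_count (fun i => c (G i)) (fun i => c' (G i)) hb2
    have hsub : S' ⊆ Finset.univ.filter fun i => c (G i) = 0 ∧ c' (G i) = 0 := by
      intro i hi
      have hiU : G i ∈ U := Submodule.subset_span ⟨⟨i, hi⟩, rfl⟩
      simp only [Finset.mem_filter, Finset.mem_univ, true_and]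
      exact ⟨(Submodule.mem_dualAnnihilator _).mp hc _ hiU,
        (Submodule.mem_dualAnnihilator _).mp hc' _ hiU⟩
    have ha : k - 1 ≤ (Finset.univ.filter fun i => c (G i) = 0 ∧ c' (G i) = 0).card :=
      hS'card ▸ Finset.card_le_card hsub
    have hineq : (q + 1) * d + q * (k - 1) ≤ q * n :=
      le_trans (Nat.add_le_add_left (Nat.mul_le_mul_left q ha) _) hcore
    have hn : n = d + (k - 1) + s := by omega
    have hqn : q * n = q * d + q * (k - 1) + q * s := by rw [hn]; ring
    have hqd : (q + 1) * d = q * d + d := by rw [add_mul, one_mul]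
    have hds : d ≤ q * s := by
      rw [hqd, hqn] at hineq
      omega
    have h5 : d + k + s ≤ q * s + k + s :=
      Nat.add_le_add_right (Nat.add_le_add_right hds k) s
    have h6 : s * (q + 1) + k = q * s + k + s := by ring
    rw [h6, ← hs]
    exact h5
  · -- Claim 2
    intro hs2
    classical
    set Z := Finset.univ.filter fun i => φ₀ (G i) = 0 with hZ
    have hZcard : Z.card + d = n := hφ₀
    have hk1 : k + 1 ≤ Z.card := by omega
    obtain ⟨T, hTZ, hTcard⟩ := Finset.exists_subset_card_eq hk1
    set L : ({x // x ∈ T} → F) →ₗ[F] (Fin k → F) :=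
      sumMap (fun i : {x // x ∈ T} => G i.1) with hL
    have hφT : ∀ i : {x // x ∈ T}, φ₀ (G i.1) = 0 := by
      intro i
      have := hTZ i.2
      rw [hZ, Finset.mem_filter] at this
      exact this.2
    have hrange : LinearMap.range L ≤ LinearMap.ker φ₀ := by
      rintro _ ⟨w, rfl⟩
      simp only [LinearMap.mem_ker]
      show φ₀ (∑ i, w i • G i.1) = 0
      rw [map_sum]
      exact Finset.sum_eq_zero fun i _ => by rw [map_smul, hφT i, smul_zero]
    have hφr : finrank F (LinearMap.range φ₀) = 1 := by
      have hle : finrank F (LinearMap.range φ₀) ≤ 1 :=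
        (Submodule.finrank_le _).trans_eq (Module.finrank_self F)
      have hv : ∃ v, φ₀ v ≠ 0 := by
        by_contra hno
        push_neg at hno
        exact hφ₀ne (LinearMap.ext fun v => by simp [hno v])
      obtain ⟨v, hv⟩ := hv
      have hnt : Nontrivial (LinearMap.range φ₀) :=
        ⟨⟨⟨φ₀ v, LinearMap.mem_range_self _ v⟩, 0, by simpa [Subtype.ext_iff] using hv⟩⟩
      have hpos : 0 < finrank F (LinearMap.range φ₀) := Module.finrank_pos_iff.mpr hnt
      omega
    have hkerφ : finrank F (LinearMap.ker φ₀) + 1 = k := by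
      have h := LinearMap.finrank_range_add_finrank_ker φ₀
      rw [Module.finrank_fin_fun, hφr] at h
      omega
    have hrL : finrank F (LinearMap.range L) ≤ k - 1 := by
      have := Submodule.finrank_mono hrange
      omega
    have hkerL : 2 ≤ finrank F (LinearMap.ker L) := by
      have h := LinearMap.finrank_range_add_finrank_ker L
      rw [Module.finrank_pi, Fintype.card_coe, hTcard] at h
      omega
    obtain ⟨w1, w2, hw1, hw2, hpair⟩ := exists_indep_pair (LinearMap.ker L) hkerL
    set ext : ({x // x ∈ T} → F) → Fin n → F :=
      fun w i => if h : i ∈ T then w ⟨i, h⟩ else 0 with hext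
    have hext_lin : ∀ (α β : F) (w w' : {x // x ∈ T} → F) (i : Fin n),
        ext (α • w + β • w') i = α * ext w i + β * ext w' i := by
      intro α β w w' i
      by_cases h : i ∈ T <;> simp [hext, h]
    have hext_sum : ∀ w : {x // x ∈ T} → F, ∑ i, ext w i • G i = L w := by
      intro w
      show _ = ∑ i : {x // x ∈ T}, w i • G i.1
      have h1 : ∑ i : Fin n, ext w i • G i = ∑ i ∈ T, ext w i • G i :=
        (Finset.sum_subset (Finset.subset_univ T)
          (fun i _ hiT => by simp [hext, hiT])).symm
      have h2 : ∑ i ∈ T, ext w i • G i = ∑ i : {x // x ∈ T}, ext w i.1 • G i.1 :=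
        (Finset.sum_coe_sort T (fun i => ext w i • G i)).symm
      rw [h1, h2]
      refine Finset.sum_congr rfl fun i _ => ?_
      have : ext w i.1 = w i := by simp [hext, i.2]
      rw [this]
    have hb2 : ∀ α β : F, ¬(α = 0 ∧ β = 0) →
        (Finset.univ.filter fun i => α * ext w1 i + β * ext w2 i = 0).card + dperp ≤ n := by
      intro α β hab
      set w := α • w1 + β • w2 with hw
      have hwne : w ≠ 0 := hpair α β hab
      have hwker : w ∈ LinearMap.ker L :=
        Submodule.add_mem _ (Submodule.smul_mem _ _ hw1) (Submodule.smul_mem _ _ hw2)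
      obtain ⟨j, hj⟩ : ∃ j, w j ≠ 0 := by
        by_contra hno
        push_neg at hno
        exact hwne (funext hno)
      have hextj : ext w j.1 ≠ 0 := by
        simpa [hext, j.2] using hj
      have hwsum : ∑ i, ext w i • G i = 0 := by
        rw [hext_sum w]
        exact hwker
      have hdist := dual_dist_le hind (ext w) j.1 hextj hwsum
      have hpartition := Finset.card_filter_add_card_filter_not
        (s := (Finset.univ : Finset (Fin n))) (fun i => ext w i = 0)
      have heq : (Finset.univ.filter fun i => α * ext w1 i + β * ext w2 i = 0)
          = (Finset.univ.filter fun i => ext w i = 0) := by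
        refine Finset.filter_congr fun i _ => ?_
        rw [hw, hext_lin]
      rw [heq]
      have hcu : (Finset.univ : Finset (Fin n)).card = n := by simp
      have hnn : (Finset.univ.filter fun i => ¬ ext w i = 0)
          = (Finset.univ.filter fun i => ext w i ≠ 0) := rfl
      rw [hnn] at hpartition
      omega
    have hcore := core_count (ext w1) (ext w2) hb2
    have hsub : Tᶜ ⊆ Finset.univ.filter fun i => ext w1 i = 0 ∧ ext w2 i = 0 := by
      intro i hi
      rw [Finset.mem_compl] at hi
      simp [hext, hi]
    have hacard : n - (k + 1) ≤
        (Finset.univ.filter fun i => ext w1 i = 0 ∧ ext w2 i = 0).card := by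
      have := Finset.card_le_card hsub
      rwa [Finset.card_compl, Fintype.card_fin, hTcard] at this
    have hnk : k + 1 ≤ n := by omega
    have hineq : (q + 1) * dperp + q * (n - (k + 1)) ≤ q * n :=
      le_trans (Nat.add_le_add_left (Nat.mul_le_mul_left q hacard) _) hcore
    have hqn : q * n = q * (k + 1) + q * (n - (k + 1)) := by
      conv_lhs => rw [show n = (k + 1) + (n - (k + 1)) by omega]
      ring
    have h1 : (q + 1) * dperp = q * dperp + dperp := by rw [add_mul, one_mul]
    have h2 : q * (k + 1) = q * dperp + q * t := by rw [← ht]; ring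
    have hdt : dperp ≤ q * t := by
      rw [h1, hqn, h2] at hineq
      omega
    have h3 : t * (q + 1) = q * t + t := by ring
    rw [h3, ← ht]
    exact Nat.add_le_add_right hdt t
end

section
/- Let G be a non-degenerate [n,k,d]_q A^sMDS code whose dual is AMDS (t = 1). If G has a codeword of weight d + s + 1 − α for some 0 ≤ α ≤ s+1, then n ≤ q(s+1) + k − 2 + α. -/
/-!
Let `H = ker φ` be a hyperplane containing `k - 2 + α` points and fix `k - 2` of them. They span
a subspace `W` of codimension at least 2, so some functional `ψ` vanishes on `W` without being a
multiple of `φ`. Every point `x` off `H` lies on exactly one hyperplane `ker (ψ - c • φ)` of the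
pencil through `W`, namely for `c = ψ x / φ x`. Each of these `q` hyperplanes also contains the
`k - 2` chosen points, so it carries at most `(n - d) - (k - 2) = s + 1` points off `H`; hence
`n ≤ (k - 2 + α) + q (s + 1)`.
-/

open Module Finset LinearMap Submodule

theorem exists_le_ker_forall_ne_smul {F V : Type*} [Field F] [AddCommGroup V] [Module F V]
    {φ : Dual F V} {W : Submodule F V} (h : ¬ ker φ ≤ W) :
    ∃ ψ : Dual F V, W ≤ ker ψ ∧ ∀ c : F, ψ ≠ c • φ := by
  obtain ⟨v, hvφ, hvW⟩ := SetLike.not_le_iff_exists.mp h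
  obtain ⟨ψ, hψv, hψW⟩ := W.exists_dual_map_eq_bot_of_notMem hvW inferInstance
  refine ⟨ψ, le_ker_iff_map.mpr hψW, fun c hc => hψv ?_⟩
  rw [hc, LinearMap.smul_apply, mem_ker.mp hvφ, smul_zero]

theorem not_ker_le_span_range_of_card_add_one_lt {F V ι : Type*} [Field F] [AddCommGroup V]
    [Module F V] [FiniteDimensional F V] [Fintype ι] {φ : Dual F V} (hφ : φ ≠ 0) (v : ι → V)
    (h : Fintype.card ι + 1 < finrank F V) : ¬ ker φ ≤ span F (Set.range v) := fun hle => by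
  have hker := φ.finrank_ker_add_one_of_ne_zero hφ
  have hspan : finrank F (span F (Set.range v)) ≤ Fintype.card ι := finrank_range_le_card v
  have := Submodule.finrank_mono hle
  omega

theorem card_filter_ne_zero_eq_sum_card_filter_eq_mul {ι F : Type*} [Fintype ι] [Field F]
    [Fintype F] [DecidableEq F] (f g : ι → F) :
    #{i | f i ≠ 0} = ∑ c : F, #{i | f i ≠ 0 ∧ g i = c * f i} := by
  rw [card_eq_sum_card_fiberwise (f := fun i => g i / f i) (t := univ)
    (fun i _ => mem_coe.mpr (mem_univ _))]
  refine sum_congr rfl fun c _ => congrArg card ?_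
  ext i
  simp only [mem_filter, mem_univ, true_and]
  exact and_congr_right div_eq_iff

section Pencil

variable {F : Type*} [Field F] [DecidableEq F] {n k : ℕ} (G : Fin n → Fin k → F)
  {φ ψ : (Fin k → F) →ₗ[F] F} {S : Finset (Fin n)}

theorem card_filter_add_card_le_hypCount (c : F) (hS : ∀ i ∈ S, φ (G i) = 0 ∧ ψ (G i) = 0) :
    #{i | φ (G i) ≠ 0 ∧ ψ (G i) = c * φ (G i)} + #S ≤ hypCount G (ψ - c • φ) := by
  have hdisj : Disjoint ({i | φ (G i) ≠ 0 ∧ ψ (G i) = c * φ (G i)} : Finset (Fin n)) S :=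
    disjoint_left.mpr fun i hi hiS => (mem_filter.mp hi).2.1 (hS i hiS).1
  rw [← card_union_of_disjoint hdisj, hypCount]
  refine card_le_card (union_subset (fun i hi => ?_) fun i hi => ?_) <;>
    simp only [mem_filter, mem_univ, true_and, LinearMap.sub_apply, LinearMap.smul_apply,
      smul_eq_mul]
  · rw [(mem_filter.mp hi).2.2, sub_self]
  · rw [(hS i hi).1, (hS i hi).2, mul_zero, sub_zero]

theorem card_add_card_mul_le_of_pencil (hψ : ∀ c : F, ψ ≠ c • φ) [Fintype F]
    (hS : ∀ i ∈ S, φ (G i) = 0 ∧ ψ (G i) = 0) {m : ℕ}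
    (hm : ∀ θ : (Fin k → F) →ₗ[F] F, θ ≠ 0 → hypCount G θ ≤ m) :
    n + Fintype.card F * #S ≤ hypCount G φ + Fintype.card F * m := by
  have hsplit : hypCount G φ + #{i | φ (G i) ≠ 0} = n := by
    rw [hypCount, card_filter_add_card_filter_not, card_univ, Fintype.card_fin]
  have hlines : #{i | φ (G i) ≠ 0} + Fintype.card F * #S ≤ Fintype.card F * m :=
    calc #{i | φ (G i) ≠ 0} + Fintype.card F * #S
        = ∑ c : F, (#{i | φ (G i) ≠ 0 ∧ ψ (G i) = c * φ (G i)} + #S) := by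
          rw [card_filter_ne_zero_eq_sum_card_filter_eq_mul (fun i => φ (G i)) (fun i => ψ (G i)),
            sum_add_distrib, sum_const, card_univ, smul_eq_mul]
      _ ≤ ∑ _c : F, m := sum_le_sum fun c _ =>
          (card_filter_add_card_le_hypCount G c hS).trans (hm _ (sub_ne_zero.mpr (hψ c)))
      _ = Fintype.card F * m := by rw [sum_const, card_univ, smul_eq_mul]
  omega

end Pencil

theorem weight_spectrum_bound_general (F : Type*) [Field F] [Fintype F] [DecidableEq F]
    (n k d s α : ℕ) (G : Fin n → Fin k → F)
    (hk : 2 ≤ k) (hG : IsCodePS F n k d G) (hs : d + k + s = n + 1)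
    (hword : ∃ φ : (Fin k → F) →ₗ[F] F, φ ≠ 0 ∧ hypCount G φ = k - 2 + α) :
    n + 2 ≤ (s + 1) * Fintype.card F + k + α := by
  obtain ⟨-, -, -, hub, -⟩ := hG
  obtain ⟨φ, hφ, hcount⟩ := hword
  obtain ⟨S, hST, hS⟩ : ∃ S ⊆ ({i | φ (G i) = 0} : Finset (Fin n)), #S = k - 2 :=
    exists_subset_card_eq ((Nat.le_add_right _ α).trans hcount.ge)
  obtain ⟨ψ, hψW, hψ⟩ := exists_le_ker_forall_ne_smul <|
    not_ker_le_span_range_of_card_add_one_lt hφ (fun i : S => G i)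
      (by rw [Fintype.card_coe, finrank_fin_fun]; omega)
  have hSaxis : ∀ i ∈ S, φ (G i) = 0 ∧ ψ (G i) = 0 := fun i hi =>
    ⟨(mem_filter.mp (hST hi)).2, hψW (subset_span ⟨⟨i, hi⟩, rfl⟩)⟩
  have hpencil := card_add_card_mul_le_of_pencil G hψ hSaxis (m := (k - 2) + (s + 1))
    fun θ hθ => by have := hub θ hθ; omega
  rw [hcount, hS, mul_add] at hpencil
  rw [mul_comm]
  omega

/-- Let `G` be a non-degenerate `[n,k,d]_q` A^sMDS code, `d > 1`, `s ≥ 1`, whose dual is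
AMDS (`t = 1`, i.e. `d^⊥ = k`). If `G` has a codeword of weight `d + s + 1 - α` for some
`0 ≤ α ≤ s + 1` — equivalently, some hyperplane meets `G` in exactly `k - 2 + α` points —
then `n ≤ q(s+1) + k - 2 + α`. -/
theorem weight_spectrum_bound (F : Type*) [Field F] [Fintype F] [DecidableEq F]
    (n k d s α : ℕ) (G : Fin n → Fin k → F)
    (hk : 2 ≤ k) (hG : IsCodePS F n k d G) (hs : d + k + s = n + 1)
    (hd : 1 < d) (hs1 : 1 ≤ s)
    (hdual : HasDualDist F G k)
    (hα : α ≤ s + 1)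
    (hword : ∃ φ : (Fin k → F) →ₗ[F] F, φ ≠ 0 ∧ hypCount G φ = k - 2 + α) :
    n + 2 ≤ (s + 1) * Fintype.card F + k + α :=
  weight_spectrum_bound_general F n k d s α G hk hG hs hword
end

section
/- Let k ≥ 3 and let G be an [n,k,d]_q A^sMDS code with n = (s+1)(q+1)+k−2 (length-maximal). Then for each 0 ≤ j ≤ k−2, the quantity γ_j = C(n−j, k−1−j) / C(n−d−j, k−1−j) is an integer, where C denotes the binomial coefficient. -/
/-!
Let `q = |F|` and let `m = n - d` bound the number of points on a hyperplane. For independent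
forms `φ, ψ`, the `q + 1` hyperplanes through `ker φ ∩ ker ψ` cover each point off this
subspace once and each of the `a` points on it `q + 1` times, so `n + q a ≤ (q + 1) m`.
Maximal length `n + q (k - 2) = (q + 1) m` turns this into `a ≤ k - 2`, with equality only if
all hyperplanes of the pencil carry exactly `m` points. Consequently any `k - 1` points are
independent, and the hyperplane they span carries exactly `m` points.

Fix a set `J` of `j` points. Sorting the `(k-1-j)`-sets `T` of the other points by the
hyperplane spanned by `J ∪ T`, each class consists of the `(k-1-j)`-subsets of the `m - j`
further points of that hyperplane, so `C(m-j, k-1-j)` divides `C(n-j, k-1-j)`.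
-/

open Finset Module Submodule

section LinearAlgebra

variable {ι K V : Type*}

theorem Finset.dvd_card_of_card_fiber_eq {κ : Type*} [DecidableEq κ] {s : Finset ι}
    (f : ι → κ) {c : ℕ} (h : ∀ a ∈ s, #{b ∈ s | f b = f a} = c) : c ∣ #s := by
  rw [card_eq_sum_card_image f s]
  refine dvd_sum fun y hy => ?_
  obtain ⟨a, ha, rfl⟩ := mem_image.1 hy
  rw [h a ha]

theorem Finset.card_union_of_mem_powersetCard_sdiff [DecidableEq ι] {s J T : Finset ι} {r : ℕ}
    (hT : T ∈ (s \ J).powersetCard r) : #(J ∪ T) = #J + r := by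
  obtain ⟨hTJ, hTr⟩ := mem_powersetCard.1 hT
  rw [card_union_of_disjoint (disjoint_right.2 fun i hi => (mem_sdiff.1 (hTJ hi)).2), hTr]

variable [Field K] [AddCommGroup V] [Module K V]

theorem finrank_span_image_lt_card {v : ι → V} {s : Finset ι} (h : ¬ LinearIndepOn K v s) :
    finrank K (span K (v '' s)) < #s := by
  rw [LinearIndepOn, linearIndependent_iff_card_le_finrank_span, not_le] at h
  rw [Set.image_eq_range]
  simpa [Set.finrank] using h

theorem finrank_span_image_eq_card {v : ι → V} {s : Finset ι} (h : LinearIndepOn K v s) :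
    finrank K (span K (v '' s)) = #s := by
  rw [Set.image_eq_range, finrank_span_eq_card h]
  simp

theorem exists_mem_linearIndependent_pair_of_one_lt_finrank {W : Submodule K V}
    (h : 1 < finrank K W) {x : V} (hx : x ∈ W) (hx0 : x ≠ 0) :
    ∃ y ∈ W, LinearIndependent K ![x, y] := by
  obtain ⟨y, hy⟩ := exists_linearIndependent_pair_of_one_lt_finrank h (x := ⟨x, hx⟩) (by simpa)
  exact ⟨y, y.2, LinearIndependent.pair_iff.2 fun s t hst =>
    LinearIndependent.pair_iff.1 hy s t (Subtype.ext hst)⟩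

theorem LinearIndependent.pair_smul_add_smul_ne_zero {x y : V}
    (h : LinearIndependent K ![x, y]) {p : K × K} (hp : p ≠ 0) : p.1 • x + p.2 • y ≠ 0 :=
  fun h0 => hp (Prod.ext (LinearIndependent.pair_iff.1 h _ _ h0).1
    (LinearIndependent.pair_iff.1 h _ _ h0).2)

theorem apply_eq_zero_of_mem_dualAnnihilator_span {v : ι → V} {s : Set ι} {φ : Dual K V}
    (hφ : φ ∈ (span K (v '' s)).dualAnnihilator) {i : ι} (hi : i ∈ s) : φ (v i) = 0 :=
  (mem_dualAnnihilator φ).1 hφ _ (subset_span (Set.mem_image_of_mem v hi))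

end LinearAlgebra

section Pencil

variable {F : Type*} [Field F] [Fintype F] [DecidableEq F]

theorem card_filter_mul_add_mul_eq_zero (x y : F) :
    #{p : F × F | p.1 * x + p.2 * y = 0} =
      if x = 0 ∧ y = 0 then Fintype.card F * Fintype.card F else Fintype.card F := by
  split_ifs with h
  · simp [h.1, h.2]
  let ℓ : F × F →ₗ[F] F :=
    (LinearMap.fst F F F).smulRight x + (LinearMap.snd F F F).smulRight y
  have hℓ : ℓ ≠ 0 := fun h0 => h ⟨by simpa [ℓ] using LinearMap.congr_fun h0 (1, 0),
    by simpa [ℓ] using LinearMap.congr_fun h0 (0, 1)⟩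
  have hker : finrank F (LinearMap.ker ℓ) = 1 := by
    have := Dual.finrank_ker_add_one_of_ne_zero hℓ
    rw [finrank_prod, finrank_self] at this
    omega
  rw [← Fintype.card_subtype, Fintype.card_eq_nat_card, Fintype.card_eq_nat_card,
    ← pow_one (Nat.card F), ← hker, ← natCard_eq_pow_finrank]
  rfl

theorem card_erase_zero_prod :
    #(univ.erase (0 : F × F)) = (Fintype.card F - 1) * (Fintype.card F + 1) := by
  have hq : 1 ≤ Fintype.card F := Fintype.card_pos
  have hq2 : 1 ≤ Fintype.card F * Fintype.card F := Nat.one_le_iff_ne_zero.2 (by positivity)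
  rw [card_erase_of_mem (mem_univ _), card_univ, Fintype.card_prod]
  zify [hq, hq2]
  ring

theorem card_erase_zero_filter_mul_add_mul_eq_zero (x y : F) :
    #{p ∈ univ.erase (0 : F × F) | p.1 * x + p.2 * y = 0} =
      (Fintype.card F - 1) * (1 + if x = 0 ∧ y = 0 then Fintype.card F else 0) := by
  split_ifs with h
  · simpa [h.1, h.2, add_comm] using card_erase_zero_prod (F := F)
  · rw [filter_erase, card_erase_of_mem (by simp), card_filter_mul_add_mul_eq_zero, if_neg h]
    simp

/-- The nonzero pairs `p` run over each of the `q + 1` hyperplanes through `ker φ ∩ ker ψ`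
exactly `q - 1` times. -/
theorem sum_hypCount_pencil {n k : ℕ} (G : Fin n → Fin k → F) (φ ψ : (Fin k → F) →ₗ[F] F) :
    ∑ p ∈ univ.erase (0 : F × F), hypCount G (p.1 • φ + p.2 • ψ) =
      (Fintype.card F - 1) * (n + Fintype.card F * #{i | φ (G i) = 0 ∧ ψ (G i) = 0}) := by
  have := sum_card_bipartiteAbove_eq_sum_card_bipartiteBelow (s := univ.erase (0 : F × F))
    (t := (univ : Finset (Fin n))) (r := fun p i => p.1 * φ (G i) + p.2 * ψ (G i) = 0)
  simp only [bipartiteAbove, bipartiteBelow, card_erase_zero_filter_mul_add_mul_eq_zero] at this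
  simp only [hypCount, LinearMap.add_apply, LinearMap.smul_apply, smul_eq_mul, this,
    ← mul_sum, sum_add_distrib, sum_ite, sum_const_zero, sum_const, card_univ, Fintype.card_fin]
  ring

theorem add_mul_card_le_of_hypCount_le {n k m : ℕ} {G : Fin n → Fin k → F}
    (hbound : ∀ φ : (Fin k → F) →ₗ[F] F, φ ≠ 0 → hypCount G φ ≤ m)
    {φ ψ : (Fin k → F) →ₗ[F] F} (h : LinearIndependent F ![φ, ψ]) :
    n + Fintype.card F * #{i | φ (G i) = 0 ∧ ψ (G i) = 0} ≤ (Fintype.card F + 1) * m := by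
  have hq : 1 < Fintype.card F := Fintype.one_lt_card
  have hsum := sum_le_sum (s := univ.erase (0 : F × F)) fun p hp =>
    hbound _ (h.pair_smul_add_smul_ne_zero (ne_of_mem_erase hp))
  rw [sum_hypCount_pencil, sum_const, card_erase_zero_prod, smul_eq_mul, mul_assoc] at hsum
  exact Nat.le_of_mul_le_mul_left hsum (by omega)

end Pencil

/-- `G` meets every hyperplane in at most `m` points, and its length attains the bound
`n + q (k - 2) ≤ (q + 1) m` that `add_mul_card_le_of_hypCount_le` gives for a codimension-2
subspace through `k - 2` of the points. -/
structure IsLengthMaximal {F : Type*} [Field F] [Fintype F] [DecidableEq F] {n k : ℕ}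
    (G : Fin n → Fin k → F) (m : ℕ) : Prop where
  hypCount_le : ∀ φ : (Fin k → F) →ₗ[F] F, φ ≠ 0 → hypCount G φ ≤ m
  length_eq : n + Fintype.card F * (k - 2) = (Fintype.card F + 1) * m

namespace IsLengthMaximal

variable {F : Type*} [Field F] [Fintype F] [DecidableEq F] {n k m : ℕ} {G : Fin n → Fin k → F}

theorem card_le (hG : IsLengthMaximal G m) {φ ψ : (Fin k → F) →ₗ[F] F}
    (h : LinearIndependent F ![φ, ψ]) : #{i | φ (G i) = 0 ∧ ψ (G i) = 0} ≤ k - 2 := by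
  have := add_mul_card_le_of_hypCount_le hG.hypCount_le h
  rw [← hG.length_eq, add_le_add_iff_left] at this
  exact Nat.le_of_mul_le_mul_left this Fintype.card_pos

theorem hypCount_eq_of_le_card (hG : IsLengthMaximal G m) {φ ψ : (Fin k → F) →ₗ[F] F}
    (h : LinearIndependent F ![φ, ψ]) (hcard : k - 2 ≤ #{i | φ (G i) = 0 ∧ ψ (G i) = 0}) :
    hypCount G φ = m := by
  have hle : ∀ p ∈ univ.erase (0 : F × F), hypCount G (p.1 • φ + p.2 • ψ) ≤ m :=
    fun p hp => hG.hypCount_le _ (h.pair_smul_add_smul_ne_zero (ne_of_mem_erase hp))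
  have hsum : ∑ p ∈ univ.erase (0 : F × F), hypCount G (p.1 • φ + p.2 • ψ) =
      ∑ _p ∈ univ.erase (0 : F × F), m := by
    rw [sum_hypCount_pencil, sum_const, card_erase_zero_prod, smul_eq_mul,
      (hG.card_le h).antisymm hcard, hG.length_eq, mul_assoc]
  simpa using (sum_eq_sum_iff_of_le hle).1 hsum (1, 0) (by simp)

theorem linearIndepOn (hG : IsLengthMaximal G m) {t : Finset (Fin n)} (ht : #t + 1 = k) :
    LinearIndepOn F G t := by
  by_contra hdep
  have hV := finrank_span_image_lt_card hdep
  have hann := Subspace.finrank_add_finrank_dualAnnihilator_eq (span F (G '' t))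
  rw [finrank_fin_fun] at hann
  obtain ⟨φ, hφ, hφ0⟩ := exists_mem_ne_zero_of_ne_bot
    (p := (span F (G '' t)).dualAnnihilator) fun h0 => by
      rw [h0, finrank_bot] at hann
      omega
  obtain ⟨ψ, hψ, h⟩ := exists_mem_linearIndependent_pair_of_one_lt_finrank (by omega) hφ hφ0
  have hsub : t ⊆ ({i | φ (G i) = 0 ∧ ψ (G i) = 0} : Finset (Fin n)) := fun i hi =>
    mem_filter.2 ⟨mem_univ _, apply_eq_zero_of_mem_dualAnnihilator_span hφ hi,
      apply_eq_zero_of_mem_dualAnnihilator_span hψ hi⟩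
  have := card_le_card hsub
  have := hG.card_le h
  omega

theorem hypCount_eq_of_linearIndepOn (hG : IsLengthMaximal G m) {u : Finset (Fin n)}
    (hu : #u + 2 = k) (hind : LinearIndepOn F G u) {φ : (Fin k → F) →ₗ[F] F} (hφ0 : φ ≠ 0)
    (hφ : ∀ i ∈ u, φ (G i) = 0) : hypCount G φ = m := by
  have hann := Subspace.finrank_add_finrank_dualAnnihilator_eq (span F (G '' u))
  rw [finrank_fin_fun, finrank_span_image_eq_card hind] at hann
  have hφmem : φ ∈ (span F (G '' u)).dualAnnihilator := by
    rw [mem_dualAnnihilator]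
    intro w hw
    exact (span_le (p := LinearMap.ker φ)).2 (by rintro - ⟨i, hi, rfl⟩; exact hφ i hi) hw
  have h2 : 1 < finrank F (span F (G '' u)).dualAnnihilator := by omega
  obtain ⟨ψ, hψ, h⟩ := exists_mem_linearIndependent_pair_of_one_lt_finrank h2 hφmem hφ0
  refine hG.hypCount_eq_of_le_card h ?_
  have hsub : u ⊆ ({i | φ (G i) = 0 ∧ ψ (G i) = 0} : Finset (Fin n)) := fun i hi =>
    mem_filter.2 ⟨mem_univ _, hφ i hi, apply_eq_zero_of_mem_dualAnnihilator_span hψ hi⟩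
  have := card_le_card hsub
  omega

open Classical in
theorem card_filter_mem_span_eq (hG : IsLengthMaximal G m) (hk : 2 ≤ k) {t : Finset (Fin n)}
    (ht : #t + 1 = k) : #{i | G i ∈ span F (G '' t)} = m := by
  have hind := hG.linearIndepOn ht
  have hrank := finrank_span_image_eq_card hind
  obtain ⟨φ, hφ0, hle⟩ := (span F (G '' t)).exists_le_ker_of_lt_top
    (lt_top_of_finrank_lt_finrank (by rw [finrank_fin_fun]; omega))
  have hker : span F (G '' t) = LinearMap.ker φ := by
    refine eq_of_le_of_finrank_eq hle ?_
    have := Dual.finrank_ker_add_one_of_ne_zero hφ0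
    rw [finrank_fin_fun] at this
    omega
  obtain ⟨i, hi⟩ : t.Nonempty := card_pos.1 (by omega)
  have := hG.hypCount_eq_of_linearIndepOn (u := t.erase i) (by rw [card_erase_of_mem hi]; omega)
    (hind.mono (coe_subset.2 (erase_subset _ _))) hφ0
    fun j hj => hle (subset_span (Set.mem_image_of_mem G (erase_subset _ _ hj)))
  simpa [hypCount, hker] using this

theorem span_image_eq_span_image_iff (hG : IsLengthMaximal G m) {s t : Finset (Fin n)}
    (hs : #s + 1 = k) (ht : #t + 1 = k) :
    span F (G '' s) = span F (G '' t) ↔ ∀ i ∈ s, G i ∈ span F (G '' t) := by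
  refine ⟨fun h i hi => h ▸ subset_span (Set.mem_image_of_mem G hi), fun h => ?_⟩
  refine eq_of_le_of_finrank_eq (span_le.2 ?_) ?_
  · rintro - ⟨i, hi, rfl⟩
    exact h i hi
  · rw [finrank_span_image_eq_card (hG.linearIndepOn hs),
      finrank_span_image_eq_card (hG.linearIndepOn ht)]
    omega

open Classical in
theorem filter_span_union_eq_powersetCard (hG : IsLengthMaximal G m) {J T₀ : Finset (Fin n)}
    {r : ℕ} (hr : #J + r + 1 = k) (hT₀ : T₀ ∈ (univ \ J).powersetCard r) :
    {T ∈ (univ \ J).powersetCard r | span F (G '' ↑(J ∪ T)) = span F (G '' ↑(J ∪ T₀))} =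
      (({i | G i ∈ span F (G '' ↑(J ∪ T₀))} : Finset (Fin n)) \ J).powersetCard r := by
  ext T
  simp only [mem_filter, mem_powersetCard]
  constructor
  · rintro ⟨⟨hTJ, hTr⟩, heq⟩
    refine ⟨fun i hi => mem_sdiff.2 ⟨mem_filter.2 ⟨mem_univ _, ?_⟩, (mem_sdiff.1 (hTJ hi)).2⟩, hTr⟩
    rw [← heq]
    exact subset_span (Set.mem_image_of_mem G (mem_union_right _ hi))
  · rintro ⟨hTX, hTr⟩
    have hT : T ⊆ univ \ J ∧ #T = r :=
      ⟨hTX.trans (sdiff_subset_sdiff (subset_univ _) le_rfl), hTr⟩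
    have hcard := card_union_of_mem_powersetCard_sdiff (mem_powersetCard.2 hT)
    have hcard₀ := card_union_of_mem_powersetCard_sdiff hT₀
    refine ⟨hT, (hG.span_image_eq_span_image_iff (by omega) (by omega)).2 fun i hi => ?_⟩
    rcases mem_union.1 hi with hi | hi
    · exact subset_span (Set.mem_image_of_mem G (mem_union_left _ hi))
    · exact (mem_filter.1 (mem_sdiff.1 (hTX hi)).1).2

theorem choose_dvd_choose (hG : IsLengthMaximal G m) (J : Finset (Fin n)) (hJ : #J + 2 ≤ k) :
    (m - #J).choose (k - 1 - #J) ∣ (n - #J).choose (k - 1 - #J) := by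
  classical
  have hr : #J + (k - 1 - #J) + 1 = k := by omega
  have hS : #((univ \ J).powersetCard (k - 1 - #J)) = (n - #J).choose (k - 1 - #J) := by
    rw [card_powersetCard, card_univ_sdiff, Fintype.card_fin]
  rw [← hS]
  refine dvd_card_of_card_fiber_eq (fun T => span F (G '' ↑(J ∪ T))) fun T₀ hT₀ => ?_
  have hJX : J ⊆ ({i | G i ∈ span F (G '' ↑(J ∪ T₀))} : Finset (Fin n)) := fun i hi =>
    mem_filter.2 ⟨mem_univ _, subset_span (Set.mem_image_of_mem G (mem_union_left _ hi))⟩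
  have hcard₀ := card_union_of_mem_powersetCard_sdiff hT₀
  rw [hG.filter_span_union_eq_powersetCard hr hT₀, card_powersetCard, card_sdiff_of_subset hJX,
    hG.card_filter_mem_span_eq (by omega) (by omega)]

end IsLengthMaximal

/-- Let `k ≥ 3` and let `G` be an `[n,k,d]_q` A^sMDS code of maximal length
`n = (s+1)(q+1) + k - 2`. Then for each `0 ≤ j ≤ k - 2` the quantity
`γ_j = C(n-j, k-1-j) / C(n-d-j, k-1-j)` is an integer. -/
theorem length_maximal_integrality (F : Type*) [Field F] [Fintype F] [DecidableEq F]
    (n k d s : ℕ) (G : Fin n → Fin k → F)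
    (hk : 3 ≤ k) (hG : IsCodePS F n k d G) (hs : d + k + s = n + 1)
    (hmax : n + 2 = (s + 1) * (Fintype.card F + 1) + k) :
    ∀ j : ℕ, j ≤ k - 2 →
      Nat.choose (n - d - j) (k - 1 - j) ∣ Nat.choose (n - j) (k - 1 - j) := by
  intro j hj
  have hmaximal : IsLengthMaximal G (n - d) := by
    refine ⟨fun φ hφ => Nat.le_sub_of_add_le (hG.2.2.2.1 φ hφ), ?_⟩
    obtain ⟨r, rfl⟩ : ∃ r, k = r + 2 := ⟨k - 2, by omega⟩
    rw [show n - d = s + 1 + r by omega, Nat.add_sub_cancel]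
    linarith
  obtain ⟨J, -, rfl⟩ := exists_subset_card_eq (show j ≤ #(univ : Finset (Fin n)) by
    rw [card_univ, Fintype.card_fin]
    omega)
  exact hmaximal.choose_dvd_choose J (by omega)
end

section
/- Let s ≥ 1, k ≥ 3, and suppose there exists a prime p with s < p < k+s dividing the product ∏_{i=1}^{s} (q(s+1)+i). Then m^s(k,q) ≤ (s+1)(q+1)+k−3; i.e., no [n,k,d]_q A^sMDS code attains the length n = (s+1)(q+1)+k−2. -/
/-!
Through a codimension-two subspace `W` pass `q + 1` hyperplanes (a pencil), and counting points
gives `∑ #(H ∩ G) = n + q · #(W ∩ G)`. Since every hyperplane carries at most `n - d` points,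
a `W` spanned by `k - 2` points of `G` forces `d ≤ (s + 1) q`, i.e. `n ≤ (s + 1)(q + 1) + k - 2`.

If equality holds, every subspace of dimension `j ≤ k - 2` contains at most `j` points, every
pencil through a `W` spanned by `k - 2` points consists of secants only, and double counting
incident (secant, point) pairs over a `j`-space `W` spanned by `j` points shows that the number
`γ_j` of secants through `W` satisfies
`γ_j · (s + 1) ⋯ (s + k - 1 - j) = (d + s + 1) ⋯ (d + s + k - 1 - j)`.
For `j = k + s - 1 - p`, multiplying by `s!` shows that `p` divides `s! · (d + s + 1) ⋯ (d + p)`,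
hence one of `d + s + 1, …, d + p`; then it divides none of `d + 1, …, d + s`.
-/

open Finset Module Submodule
open scoped LinearAlgebra.Projectivization

lemma Submodule.le_ker_iff_mem_dualAnnihilator {R M : Type*} [CommSemiring R] [AddCommMonoid M]
    [Module R M] {W : Submodule R M} {χ : Dual R M} :
    W ≤ LinearMap.ker χ ↔ χ ∈ W.dualAnnihilator := by
  simp [SetLike.le_def, mem_dualAnnihilator]

lemma Submodule.exists_linearIndependent_pair_span_eq {F E : Type*} [Field F] [AddCommGroup E]
    [Module F E] (D : Submodule F E) (hD : finrank F D = 2) :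
    ∃ φ ψ : E, LinearIndependent F ![φ, ψ] ∧ span F {φ, ψ} = D := by
  have := Module.finite_of_finrank_pos (hD ▸ two_pos)
  let b := Module.finBasisOfFinrankEq F D hD
  have hb : D.subtype ∘ b = ![(b 0 : E), b 1] := by
    ext i : 1; fin_cases i <;> rfl
  have hli := b.linearIndependent.map' _ (ker_subtype D)
  rw [hb] at hli
  refine ⟨b 0, b 1, hli, ?_⟩
  rw [← Matrix.range_cons_cons_empty, ← hb, Set.range_comp, span_image, b.span_eq,
    map_subtype_top]

lemma Submodule.exists_linearIndependent_pair_span_eq_dualAnnihilator {F V : Type*} [Field F]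
    [AddCommGroup V] [Module F V] [FiniteDimensional F V] (W : Submodule F V)
    (hW : finrank F W + 2 = finrank F V) :
    ∃ φ ψ : Dual F V, LinearIndependent F ![φ, ψ] ∧ span F {φ, ψ} = W.dualAnnihilator := by
  apply exists_linearIndependent_pair_span_eq
  have := Subspace.finrank_add_finrank_dualAnnihilator_eq W
  omega

namespace ProjectiveSystem

section Pencil

variable {F M : Type*} [Field F] [AddCommGroup M] [Module F M]

def pencil (φ ψ : M) : Option F → M
  | none => φ
  | some c => ψ + c • φ

variable {φ ψ : M}

lemma pencil_mem_span (o : Option F) : pencil φ ψ o ∈ span F {φ, ψ} := by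
  have hφ : φ ∈ span F {φ, ψ} := subset_span (by simp)
  have hψ : ψ ∈ span F {φ, ψ} := subset_span (by simp)
  cases o with
  | none => exact hφ
  | some c => exact add_mem hψ (smul_mem _ c hφ)

lemma pencil_ne_zero (h : LinearIndependent F ![φ, ψ]) (o : Option F) : pencil φ ψ o ≠ 0 := by
  cases o with
  | none => exact h.ne_zero 0
  | some c =>
    intro h0
    have := LinearIndependent.pair_iff.mp h c 1 (by rw [← h0, pencil]; module)
    exact one_ne_zero this.2

lemma pencil_eq_of_smul_eq (h : LinearIndependent F ![φ, ψ]) {a : F} {o o' : Option F}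
    (hoo' : a • pencil φ ψ o = pencil φ ψ o') : o = o' := by
  have pair := LinearIndependent.pair_iff.mp h
  cases o <;> cases o' <;> simp only [pencil] at hoo'
  case none.none => rfl
  case none.some c' =>
    have := pair (a - c') (-1) (by linear_combination (norm := module) hoo')
    simp at this
  case some.none c =>
    have := pair (a * c - 1) a (by linear_combination (norm := module) hoo')
    simp [this.2] at this
  case some.some c c' =>
    have := pair (a * c - c') (a - 1) (by linear_combination (norm := module) hoo')
    rw [sub_eq_zero.mp this.2, one_mul, sub_eq_zero] at this
    rw [this.1]

lemma exists_eq_smul_pencil {χ : M} (hχ : χ ∈ span F {φ, ψ}) :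
    ∃ (a : F) (o : Option F), χ = a • pencil φ ψ o := by
  obtain ⟨a, b, rfl⟩ := mem_span_pair.mp hχ
  by_cases hb : b = 0
  · exact ⟨a, none, by simp [pencil, hb]⟩
  · refine ⟨b, some (b⁻¹ * a), ?_⟩
    rw [pencil, smul_add, smul_smul, mul_inv_cancel_left₀ hb, add_comm]

open scoped Classical in
lemma card_filter_rep_mem_span [Fintype F] [Fintype (ℙ F M)] (h : LinearIndependent F ![φ, ψ]) :
    #{P : ℙ F M | P.rep ∈ span F {φ, ψ}} = Fintype.card F + 1 := by
  have himage : ({P : ℙ F M | P.rep ∈ span F {φ, ψ}} : Finset _) =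
      univ.image fun o => Projectivization.mk F (pencil φ ψ o) (pencil_ne_zero h o) := by
    ext P
    simp only [mem_filter, mem_univ, true_and, mem_image]
    constructor
    · intro hP
      obtain ⟨a, o, ha⟩ := exists_eq_smul_pencil hP
      rw [← P.mk_rep]
      exact ⟨o, ((Projectivization.mk_eq_mk_iff' F _ _ _ _).mpr ⟨a, ha.symm⟩).symm⟩
    · rintro ⟨o, rfl⟩
      obtain ⟨a, ha⟩ := Projectivization.exists_smul_eq_mk_rep F _ (pencil_ne_zero h o)
      rw [← ha]
      exact smul_mem _ _ (pencil_mem_span o)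
  rw [himage, card_image_of_injective, card_univ, Fintype.card_option]
  intro o o' hoo'
  obtain ⟨a, ha⟩ := (Projectivization.mk_eq_mk_iff' F _ _ _ _).mp hoo'
  exact (pencil_eq_of_smul_eq h ha).symm

end Pencil

section PencilCount

variable {F V : Type*} [Field F] [Fintype F] [DecidableEq F] [AddCommGroup V] [Module F V]

lemma card_pencil_apply_eq_zero (φ ψ : Dual F V) (x : V) :
    #{o : Option F | pencil φ ψ o x = 0} =
      1 + if φ x = 0 ∧ ψ x = 0 then Fintype.card F else 0 := by
  rw [card_filter, Fintype.sum_option]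
  simp only [pencil, LinearMap.add_apply, LinearMap.smul_apply, smul_eq_mul]
  by_cases hφ : φ x = 0
  · by_cases hψ : ψ x = 0 <;> simp [hφ, hψ, add_comm]
  · have hc : ∀ c : F, ψ x + c * φ x = 0 ↔ c = -ψ x / φ x := fun c => by
      rw [eq_div_iff hφ]; constructor <;> intro h <;> linear_combination h
    simp [hφ, hc]

lemma sum_hypCount_pencil {n k : ℕ} (G : Fin n → Fin k → F) (φ ψ : Dual F (Fin k → F)) :
    ∑ o : Option F, hypCount G (pencil φ ψ o) =
      n + Fintype.card F * #{i | φ (G i) = 0 ∧ ψ (G i) = 0} := by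
  simp only [hypCount, card_filter]
  rw [Finset.sum_comm]
  simp only [← card_filter, card_pencil_apply_eq_zero]
  simp [sum_add_distrib, ← sum_filter, mul_comm]

end PencilCount

section Code

open scoped Classical

variable {F : Type*} [Field F] {n k : ℕ} (G : Fin n → Fin k → F)

noncomputable def pointCount (W : Submodule F (Fin k → F)) : ℕ := #{i | G i ∈ W}

lemma pointCount_lt_sup {W : Submodule F (Fin k → F)} {i : Fin n} (hi : G i ∉ W) :
    pointCount G W < pointCount G (W ⊔ span F {G i}) := by
  refine card_lt_card ⟨monotone_filter_right _ fun j _ hj => mem_sup_left hj, ?_⟩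
  intro h
  have := h (mem_filter.mpr ⟨mem_univ i, mem_sup_right (mem_span_singleton_self _)⟩)
  exact hi (mem_filter.mp this).2

lemma exists_notMem_of_span_eq_top (hspan : span F (Set.range G) = ⊤)
    {W : Submodule F (Fin k → F)} (hW : W ≠ ⊤) : ∃ i, G i ∉ W := by
  by_contra! h
  exact hW (eq_top_iff.mpr (hspan ▸ span_le.mpr (Set.range_subset_iff.mpr h)))

lemma exists_finrank_eq_le_pointCount (hspan : span F (Set.range G) = ⊤) :
    ∀ j ≤ k, ∃ W : Submodule F (Fin k → F), finrank F W = j ∧ j ≤ pointCount G W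
  | 0, _ => ⟨⊥, finrank_bot F _, Nat.zero_le _⟩
  | j + 1, hj => by
    obtain ⟨W, hWj, hWc⟩ := exists_finrank_eq_le_pointCount hspan j (by omega)
    have hW : W ≠ ⊤ := fun h => by
      rw [h, finrank_top, finrank_fin_fun] at hWj; omega
    obtain ⟨i, hi⟩ := exists_notMem_of_span_eq_top G hspan hW
    exact ⟨W ⊔ span F {G i}, by rw [finrank_sup_span_singleton hi, hWj],
      by have := pointCount_lt_sup G hi; omega⟩

variable [DecidableEq F]

lemma hypCount_smul {a : F} (ha : a ≠ 0) (φ : Dual F (Fin k → F)) :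
    hypCount G (a • φ) = hypCount G φ := by
  simp [hypCount, ha]

lemma card_filter_notMem_add_pointCount {W : Submodule F (Fin k → F)}
    {φ : Dual F (Fin k → F)} (hW : W ≤ LinearMap.ker φ) :
    #{i | φ (G i) = 0 ∧ G i ∉ W} + pointCount G W = hypCount G φ := by
  rw [hypCount, ← card_filter_add_card_filter_not (s := {i | φ (G i) = 0}) (fun i => G i ∉ W),
    filter_filter, filter_filter, pointCount]
  congr 2
  ext i
  simpa only [mem_filter, mem_univ, true_and, not_not, iff_and_self] using
    fun h => LinearMap.mem_ker.mp (hW h)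

lemma pointCount_le_of_span_eq_dualAnnihilator {W : Submodule F (Fin k → F)}
    {φ ψ : Dual F (Fin k → F)} (hspan : span F {φ, ψ} = W.dualAnnihilator) :
    pointCount G W ≤ #{i | φ (G i) = 0 ∧ ψ (G i) = 0} := by
  have hker : ∀ χ ∈ span F {φ, ψ}, W ≤ LinearMap.ker χ := fun χ hχ =>
    le_ker_iff_mem_dualAnnihilator.mpr (hspan ▸ hχ)
  exact card_le_card (monotone_filter_right _ fun i _ hi =>
    ⟨hker φ (subset_span (by simp)) hi, hker ψ (subset_span (by simp)) hi⟩)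

variable [Fintype F] {d : ℕ}

lemma sum_hypCount_pencil_add_le (hb : ∀ χ : Dual F (Fin k → F), χ ≠ 0 → hypCount G χ + d ≤ n)
    {φ ψ : Dual F (Fin k → F)} (h : LinearIndependent F ![φ, ψ]) :
    ∑ o : Option F, (hypCount G (pencil φ ψ o) + d) ≤ ∑ _o : Option F, n :=
  sum_le_sum fun o _ => hb _ (pencil_ne_zero h o)

lemma mul_pointCount_add_le (hb : ∀ χ : Dual F (Fin k → F), χ ≠ 0 → hypCount G χ + d ≤ n)
    {W : Submodule F (Fin k → F)} (hW : finrank F W + 2 = k) :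
    Fintype.card F * pointCount G W + (Fintype.card F + 1) * d ≤ Fintype.card F * n := by
  obtain ⟨φ, ψ, h, hspan⟩ :=
    W.exists_linearIndependent_pair_span_eq_dualAnnihilator (by rwa [finrank_fin_fun])
  have hle := pointCount_le_of_span_eq_dualAnnihilator G hspan
  have := sum_hypCount_pencil_add_le G hb h
  rw [sum_add_distrib, sum_hypCount_pencil] at this
  simp only [sum_const, card_univ, Fintype.card_option, smul_eq_mul] at this
  nlinarith

theorem length_add_two_le (hspan : span F (Set.range G) = ⊤)
    (hb : ∀ χ : Dual F (Fin k → F), χ ≠ 0 → hypCount G χ + d ≤ n) (hk : 2 ≤ k) {s : ℕ}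
    (hn : d + k + s = n + 1) : n + 2 ≤ (s + 1) * (Fintype.card F + 1) + k := by
  obtain ⟨W, hWr, hWc⟩ := exists_finrank_eq_le_pointCount G hspan (k - 2) (by omega)
  have := mul_pointCount_add_le G hb (W := W) (by omega)
  obtain ⟨j, rfl⟩ : ∃ j, k = j + 2 := ⟨k - 2, by omega⟩
  have : Fintype.card F * j ≤ Fintype.card F * pointCount G W := Nat.mul_le_mul_left _ (by omega)
  nlinarith

lemma pointCount_le_finrank (hspan : span F (Set.range G) = ⊤)
    (hb : ∀ χ : Dual F (Fin k → F), χ ≠ 0 → hypCount G χ + d ≤ n) {s : ℕ}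
    (hd : d = Fintype.card F * (s + 1)) (hn : d + k + s = n + 1) {W : Submodule F (Fin k → F)}
    (hW : finrank F W + 2 ≤ k) : pointCount G W ≤ finrank F W := by
  obtain ⟨r, hr⟩ := Nat.exists_eq_add_of_le hW
  induction r generalizing W with
  | zero =>
    have := mul_pointCount_add_le G hb (W := W) hr.symm
    refine Nat.le_of_mul_le_mul_left ?_ (Fintype.card_pos (α := F))
    nlinarith
  | succ r ih =>
    obtain ⟨i, hi⟩ := exists_notMem_of_span_eq_top G hspan (W := W) fun h => by
      rw [h, finrank_top, finrank_fin_fun] at hr; omega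
    have := finrank_sup_span_singleton hi
    have := ih (W := W ⊔ span F {G i}) (by omega) (by omega)
    have := pointCount_lt_sup G hi
    omega

instance : Finite (Dual F (Fin k → F)) := Module.finite_of_finite F

noncomputable instance : Fintype (ℙ F (Dual F (Fin k → F))) := Fintype.ofFinite _

/-- Hyperplanes are taken as points of the projective dual space, so that each one is counted
once rather than once for every nonzero multiple of its equation. -/
noncomputable def secants (d : ℕ) (W : Submodule F (Fin k → F)) :
    Finset (ℙ F (Dual F (Fin k → F))) :=
  {P | W ≤ LinearMap.ker P.rep ∧ hypCount G P.rep + d = n}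

lemma sum_card_secants_sup (W : Submodule F (Fin k → F)) :
    ∑ P ∈ secants G d W, #{i | P.rep (G i) = 0 ∧ G i ∉ W} =
      ∑ i with G i ∉ W, #(secants G d (W ⊔ span F {G i})) := by
  let incident : ℙ F (Dual F (Fin k → F)) → Fin n → Prop := fun P i => P.rep (G i) = 0
  calc ∑ P ∈ secants G d W, #{i | P.rep (G i) = 0 ∧ G i ∉ W}
      = ∑ P ∈ secants G d W, #(bipartiteAbove incident {i | G i ∉ W} P) := by
        simp only [bipartiteAbove, filter_filter, and_comm, incident]
    _ = ∑ i with G i ∉ W, #(bipartiteBelow incident (secants G d W) i) :=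
        sum_card_bipartiteAbove_eq_sum_card_bipartiteBelow incident
    _ = ∑ i with G i ∉ W, #(secants G d (W ⊔ span F {G i})) := by
        simp only [bipartiteBelow, secants, filter_filter, sup_le_iff, span_singleton_le_iff_mem,
          LinearMap.mem_ker, and_right_comm, incident]

lemma card_secants_mul (W : Submodule F (Fin k → F)) :
    #(secants G d W) * (n - d - pointCount G W) =
      ∑ i with G i ∉ W, #(secants G d (W ⊔ span F {G i})) := by
  rw [← sum_card_secants_sup, ← smul_eq_mul, ← sum_const]
  refine sum_congr rfl fun P hP => ?_
  obtain ⟨hW, hsecant⟩ := (mem_filter.mp hP).2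
  have := card_filter_notMem_add_pointCount G hW
  omega

lemma card_secants_of_finrank_add_two
    (hb : ∀ χ : Dual F (Fin k → F), χ ≠ 0 → hypCount G χ + d ≤ n) {s : ℕ}
    (hd : d = Fintype.card F * (s + 1)) (hn : d + k + s = n + 1)
    {W : Submodule F (Fin k → F)} (hW : finrank F W + 2 = k)
    (hWc : finrank F W ≤ pointCount G W) :
    #(secants G d W) = Fintype.card F + 1 := by
  obtain ⟨φ, ψ, h, hspan⟩ :=
    W.exists_linearIndependent_pair_span_eq_dualAnnihilator (by rwa [finrank_fin_fun])
  have hle := pointCount_le_of_span_eq_dualAnnihilator G hspan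
  have hsecant : ∀ o : Option F, hypCount G (pencil φ ψ o) + d = n := by
    have := sum_hypCount_pencil_add_le G hb h
    have heq := (sum_eq_sum_iff_of_le fun o _ => hb _ (pencil_ne_zero h o)).mp (by
      refine le_antisymm this ?_
      rw [sum_add_distrib, sum_hypCount_pencil]
      simp only [sum_const, card_univ, Fintype.card_option, smul_eq_mul]
      have := Nat.mul_le_mul_left (Fintype.card F) (hWc.trans hle)
      subst hd
      nlinarith)
    exact fun o => heq o (mem_univ o)
  rw [← card_filter_rep_mem_span h]
  congr 1
  refine filter_congr fun P _ => ?_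
  rw [le_ker_iff_mem_dualAnnihilator (R := F), ← hspan]
  refine ⟨fun hP => hP.1, fun hP => ⟨hP, ?_⟩⟩
  obtain ⟨a, o, ha⟩ := exists_eq_smul_pencil hP
  have ha0 : a ≠ 0 := by rintro rfl; exact P.rep_nonzero (by simpa using ha)
  rw [ha, hypCount_smul G ha0, hsecant]

lemma card_secants_mul_ascFactorial (hspan : span F (Set.range G) = ⊤)
    (hb : ∀ χ : Dual F (Fin k → F), χ ≠ 0 → hypCount G χ + d ≤ n) {s : ℕ}
    (hd : d = Fintype.card F * (s + 1)) (hn : d + k + s = n + 1) {c : ℕ}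
    {W : Submodule F (Fin k → F)} (hW : finrank F W + c + 2 = k)
    (hWc : finrank F W ≤ pointCount G W) :
    #(secants G d W) * (s + 1).ascFactorial (c + 1) = (d + s + 1).ascFactorial (c + 1) := by
  induction c generalizing W with
  | zero =>
    rw [card_secants_of_finrank_add_two G hb hd hn (by omega) hWc, zero_add,
      Nat.ascFactorial_succ, Nat.ascFactorial_zero, Nat.ascFactorial_succ, Nat.ascFactorial_zero,
      hd]
    ring
  | succ c ih =>
    have hpc : pointCount G W = finrank F W :=
      le_antisymm (pointCount_le_finrank G hspan hb hd hn (by omega)) hWc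
    have hoff : #{i | G i ∉ W} = d + s + c + 2 := by
      have := card_filter_add_card_filter_not (s := univ) (fun i => G i ∉ W)
      simp only [not_not, card_univ, Fintype.card_fin] at this
      rw [pointCount] at hpc
      omega
    have hstep := card_secants_mul G (d := d) W
    rw [show n - d - pointCount G W = s + c + 2 by omega] at hstep
    calc #(secants G d W) * (s + 1).ascFactorial (c + 1 + 1)
        = #(secants G d W) * (s + c + 2) * (s + 1).ascFactorial (c + 1) := by
          rw [Nat.ascFactorial_succ (k := c + 1)]
          ring
      _ = ∑ i with G i ∉ W, (d + s + 1).ascFactorial (c + 1) := by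
          rw [hstep, sum_mul]
          refine sum_congr rfl fun i hi => ?_
          have hi := (mem_filter.mp hi).2
          have := pointCount_lt_sup G hi
          exact ih (by rw [finrank_sup_span_singleton hi]; omega)
            (by rw [finrank_sup_span_singleton hi]; omega)
      _ = (d + s + 1).ascFactorial (c + 1 + 1) := by
          rw [sum_const, hoff, smul_eq_mul, Nat.ascFactorial_succ (k := c + 1)]
          ring

theorem not_dvd_prod_of_length_eq (hspan : span F (Set.range G) = ⊤)
    (hb : ∀ χ : Dual F (Fin k → F), χ ≠ 0 → hypCount G χ + d ≤ n) {s : ℕ}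
    (hd : d = Fintype.card F * (s + 1)) (hn : d + k + s = n + 1) {p : ℕ} (hp : p.Prime)
    (hps : s < p) (hpk : p < k + s) : ¬ p ∣ ∏ i ∈ Icc 1 s, (d + i) := by
  intro hdvd
  obtain ⟨W, hWr, hWc⟩ := exists_finrank_eq_le_pointCount G hspan (k + s - 1 - p) (by omega)
  have key := card_secants_mul_ascFactorial G hspan hb hd hn (c := p - s - 1) (W := W)
    (by omega) (by omega)
  rw [show p - s - 1 + 1 = p - s by omega] at key
  have : p ∣ s.factorial * (d + s + 1).ascFactorial (p - s) := by
    rw [← key, mul_left_comm, Nat.factorial_mul_ascFactorial, show s + (p - s) = p by omega]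
    exact dvd_mul_of_dvd_right (Nat.dvd_factorial hp.pos le_rfl) _
  rcases hp.dvd_mul.mp this with h | h
  · exact absurd (hp.dvd_factorial.mp h) (by omega)
  · rw [Nat.ascFactorial_eq_prod_range] at h
    obtain ⟨u, hu, hpu⟩ := hp.prime.exists_mem_finset_dvd h
    obtain ⟨i, hi, hpi⟩ := hp.prime.exists_mem_finset_dvd hdvd
    rw [mem_range] at hu
    rw [mem_Icc] at hi
    have := Nat.le_of_dvd (by omega) (Nat.dvd_sub hpu hpi)
    omega

end Code

end ProjectiveSystem

theorem prime_divisor_length_bound_general (F : Type*) [Field F] [Fintype F] [DecidableEq F]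
    (k s p : ℕ) (hp : p.Prime) (hps : s < p) (hpk : p < k + s)
    (hdvd : p ∣ ∏ i ∈ Finset.Icc 1 s, (Fintype.card F * (s + 1) + i)) :
    mPar F s k + 3 ≤ (s + 1) * (Fintype.card F + 1) + k := by
  have hbound : ∀ n ∈ {n : ℕ | ∃ d : ℕ, ∃ G : Fin n → Fin k → F,
      IsCodePS F n k d G ∧ d + k + s = n + 1}, n + 3 ≤ (s + 1) * (Fintype.card F + 1) + k := by
    rintro n ⟨d, G, ⟨-, -, hspan, hb, -⟩, hn⟩
    refine lt_of_le_of_ne (ProjectiveSystem.length_add_two_le G hspan hb (by omega) hn) ?_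
    intro heq
    have hd : d = Fintype.card F * (s + 1) := by nlinarith
    exact ProjectiveSystem.not_dvd_prod_of_length_eq G hspan hb hd hn hp hps hpk (hd ▸ hdvd)
  have : 0 < (s + 1) * (Fintype.card F + 1) := by positivity
  exact Nat.add_le_of_le_sub (by omega) (csSup_le' fun n hn => Nat.le_sub_of_add_le (hbound n hn))

/-- Let `s ≥ 1`, `k ≥ 3`, and suppose some prime `p` with `s < p < k + s` divides
`∏_{i=1}^{s} (q(s+1) + i)`. Then `m^s(k,q) ≤ (s+1)(q+1) + k - 3`; i.e. no
`[n,k,d]_q` A^sMDS code attains the length `n = (s+1)(q+1) + k - 2`. -/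
theorem prime_divisor_length_bound (F : Type*) [Field F] [Fintype F] [DecidableEq F]
    (k s p : ℕ) (hs : 1 ≤ s) (hk : 3 ≤ k)
    (hp : p.Prime) (hps : s < p) (hpk : p < k + s)
    (hdvd : p ∣ ∏ i ∈ Finset.Icc 1 s, (Fintype.card F * (s + 1) + i)) :
    mPar F s k + 3 ≤ (s + 1) * (Fintype.card F + 1) + k :=
  prime_divisor_length_bound_general F k s p hp hps hpk hdvd
end
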